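/- arXiv:2408.09197 — 7 statements merged into one kernel-verified Lean document; each statement's English description precedes it below -/
import Mathlib

section
/- Let L be a finite geometric lattice of rank r. Then the diameter of the facet-ridge incidence graph of the order complex of L is at most r(r-1)/2 = binom(r,2); that is, any two maximal chains of L are connected by a path of length at most binom(r,2) in this graph. -/
/-- A finite bounded lattice is *geometric* if it is atomistic (every element is a join
of atoms) and semimodular (whenever distinct `y`, `y'` both cover `x`, the join `y ⊔ y'`
covers both). -/
def IsGeometricLattice (L : Type*) [Lattice L] [BoundedOrder L] : Prop :=
  (∀ x : L, ∃ s : Finset L, (∀ a ∈ s, IsAtom a) ∧ s.sup id = x) ∧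
  (∀ x y y' : L, y ≠ y' → x ⋖ y → x ⋖ y' → y ⋖ (y ⊔ y') ∧ y' ⋖ (y ⊔ y'))

/-- The facet-ridge incidence graph of the order complex of `L`: the vertices are the
maximal chains of `L`, two maximal chains being adjacent iff they differ in exactly one
element. -/
def facetRidgeGraph (L : Type*) [PartialOrder L] :
    SimpleGraph {c : Set L // IsMaxChain (· ≤ ·) c} where
  Adj c c' := ∃ x ∈ c.1, ∃ y ∈ c'.1, x ≠ y ∧ c.1 \ {x} = c'.1 \ {y}
  symm := by
    constructor
    rintro c c' ⟨x, hx, y, hy, hxy, h⟩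
    exact ⟨y, hy, x, hx, hxy.symm, h.symm⟩
  loopless := by
    constructor
    rintro c ⟨x, hx, y, hy, hxy, h⟩
    have : y ∈ c.1 \ {x} := ⟨hy, by simpa using hxy.symm⟩
    rw [h] at this
    exact this.2 rfl

/-!
Write maximal chains as cover sequences `⊥ = x₀ ⋖ x₁ ⋖ ⋯ ⋖ x_r = ⊤`. Suppose `x` and `y` agree
up to index `k`, let `a = y_{k+1}` and let `j` be the first index with `a ≤ x_j`. Semimodularity
gives `x_{i-1} ⊔ a ⋖ x_i ⊔ a` for `k < i < j` and `x_{j-1} ⊔ a = x_j`, so replacing `x_i` by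
`x_{i-1} ⊔ a` for `i = j - 1, j - 2, …, k + 1`, one index at a time, walks along at most
`r - k - 1` edges to a maximal chain that agrees with `y` up to index `k + 1`. Summing over `k`
gives `(r - 1) + (r - 2) + ⋯ + 0 = r.choose 2`.
-/

open Set

theorem SimpleGraph.exists_walk_length_le_of_edist_le {V : Type*} {G : SimpleGraph V} {u v : V}
    {n : ℕ} (h : G.edist u v ≤ n) : ∃ w : G.Walk u v, w.length ≤ n := by
  obtain ⟨w, hw⟩ := G.exists_walk_of_edist_ne_top (ne_top_of_le_ne_top (ENat.natCast_ne_top n) h)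
  exact ⟨w, by exact_mod_cast hw.trans_le h⟩

section Lattice

variable {L : Type*} [Lattice L]

theorem IsGeometricLattice.isWeakUpperModularLattice [BoundedOrder L]
    (h : IsGeometricLattice L) : IsWeakUpperModularLattice L where
  covBy_sup_of_inf_covBy_covBy {a b} ha hb :=
    (h.2 _ a b (fun hab => ha.ne (by rw [hab, inf_idem])) ha hb).1

section Cover

variable {x y a : L}

theorem CovBy.sup_eq_of_le (hxy : x ⋖ y) (hxa : x ⋖ x ⊔ a) (hay : a ≤ y) : x ⊔ a = y :=
  (hxy.eq_or_eq hxa.le (sup_le hxy.le hay)).resolve_left hxa.ne'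

theorem CovBy.inf_sup_eq (hxy : x ⋖ y) (hxa : x ⋖ x ⊔ a) (hay : ¬a ≤ y) : y ⊓ (x ⊔ a) = x := by
  refine (hxy.eq_or_eq (le_inf hxy.le le_sup_left) inf_le_left).resolve_right fun h => hay ?_
  rw [(hxa.eq_or_eq hxy.le (inf_eq_left.1 h)).resolve_left hxy.ne']
  exact le_sup_right

variable [IsWeakUpperModularLattice L]

theorem CovBy.covBy_sup_of_not_le (hxy : x ⋖ y) (hxa : x ⋖ x ⊔ a) (hay : ¬a ≤ y) :
    y ⋖ y ⊔ a ∧ x ⊔ a ⋖ y ⊔ a := by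
  have hinf := hxy.inf_sup_eq hxa hay
  have hy : y ⊓ (x ⊔ a) ⋖ y := by rwa [hinf]
  have hxa' : y ⊓ (x ⊔ a) ⋖ x ⊔ a := by rwa [hinf]
  have hsup : y ⊔ (x ⊔ a) = y ⊔ a := by rw [← sup_assoc, sup_eq_left.2 hxy.le]
  rw [← hsup]
  exact ⟨covBy_sup_of_inf_covBy_of_inf_covBy_left hy hxa',
    covBy_sup_of_inf_covBy_of_inf_covBy_right hy hxa'⟩

end Cover

section BoundedOrder

variable [BoundedOrder L]

structure IsCoverSeq (r : ℕ) (x : ℕ → L) : Prop where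
  zero : x 0 = ⊥
  last : x r = ⊤
  covBy : ∀ i < r, x i ⋖ x (i + 1)

namespace IsCoverSeq

variable {r : ℕ} {x y : ℕ → L}

theorem strictMonoOn (hx : IsCoverSeq r x) : StrictMonoOn x (Iic r) :=
  strictMonoOn_Iic_of_lt_succ fun i hi => by simpa using (hx.covBy i hi).lt

theorem apply_le_apply (hx : IsCoverSeq r x) {i j : ℕ} (hij : i ≤ j) (hjr : j ≤ r) :
    x i ≤ x j :=
  hx.strictMonoOn.monotoneOn (hij.trans hjr) hjr hij

theorem isMaxChain_image (hx : IsCoverSeq r x) : IsMaxChain (· ≤ ·) (x '' Iic r) := by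
  have h := IsMaxChain.range_fin_of_covBy (f := fun k : Fin (r + 1) => x k) hx.zero hx.last
    fun k => (hx.covBy k k.2).wcovBy
  rwa [← Iio_add_one_eq_Iic, ← Fin.range_val, ← range_comp]

def maxChain (hx : IsCoverSeq r x) : {c : Set L // IsMaxChain (· ≤ ·) c} :=
  ⟨x '' Iic r, hx.isMaxChain_image⟩

theorem maxChain_eq (hx : IsCoverSeq r x) (hy : IsCoverSeq r y) (h : EqOn x y (Iic r)) :
    hx.maxChain = hy.maxChain :=
  Subtype.ext h.image_eq

theorem edist_maxChain_le_one (hx : IsCoverSeq r x) (hy : IsCoverSeq r y) (i : ℕ)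
    (h : EqOn x y (Iic r \ {i})) : (facetRidgeGraph L).edist hx.maxChain hy.maxChain ≤ 1 := by
  rw [SimpleGraph.edist_le_one_iff_adj_or_eq]
  by_cases hxy : i ≤ r ∧ x i ≠ y i
  · obtain ⟨hir, hne⟩ := hxy
    have hi : {i} ⊆ Iic r := singleton_subset_iff.2 hir
    refine Or.inl ⟨x i, mem_image_of_mem x hir, y i, mem_image_of_mem y hir, hne, ?_⟩
    change x '' Iic r \ {x i} = y '' Iic r \ {y i}
    rw [← image_singleton, ← image_singleton, ← hx.strictMonoOn.injOn.image_sdiff_subset hi,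
      ← hy.strictMonoOn.injOn.image_sdiff_subset hi, h.image_eq]
  · refine Or.inr (hx.maxChain_eq hy fun l hl => ?_)
    by_cases hli : l = i
    · subst hli
      tauto
    · exact h ⟨hl, hli⟩

theorem exists_maxChain_eq [Finite L] (c : {c : Set L // IsMaxChain (· ≤ ·) c})
    (hcard : c.1.ncard = r + 1) : ∃ (x : ℕ → L) (hx : IsCoverSeq r x), hx.maxChain = c := by
  classical
  let s := Flag.ofIsMaxChain c.1 c.2
  have : Fintype s := Fintype.ofFinite s
  have hs : Fintype.card s = r + 1 := by
    rw [← Nat.card_eq_fintype_card, ← hcard]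
    rfl
  let e := monoEquivOfFin s hs
  let x : ℕ → L := fun i => if h : i < r + 1 then e ⟨i, h⟩ else ⊤
  have hx : ∀ i (hi : i < r + 1), x i = e ⟨i, hi⟩ := fun i hi => dif_pos hi
  refine ⟨x, ⟨?_, ?_, fun i hi => ?_⟩, Subtype.ext ?_⟩
  · rw [hx 0 r.succ_pos]
    exact congrArg Subtype.val e.map_bot
  · rw [hx r r.lt_succ_self]
    exact congrArg Subtype.val e.map_top
  · rw [hx i (by omega), hx (i + 1) (by omega), Flag.coe_covBy_coe, apply_covBy_apply_iff,
      Fin.covBy_iff]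
    exact Order.covBy_add_one i
  · apply Subset.antisymm
    · rintro _ ⟨i, hi, rfl⟩
      rw [hx i (Nat.lt_succ_of_le hi)]
      exact (e _).2
    · intro z hz
      refine ⟨e.symm ⟨z, hz⟩, Nat.le_of_lt_succ (e.symm _).2, ?_⟩
      rw [hx _ (e.symm _).2, e.apply_symm_apply]

end IsCoverSeq

section Shift

variable [IsWeakUpperModularLattice L] {r : ℕ} {x : ℕ → L} {a : L}

theorem IsCoverSeq.covBy_sup (hx : IsCoverSeq r x) {k i : ℕ} (hk : x k ⋖ x k ⊔ a) (hki : k ≤ i)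
    (hir : i ≤ r) (hai : ¬a ≤ x i) : x i ⋖ x i ⊔ a := by
  induction i, hki using Nat.le_induction with
  | base => exact hk
  | succ i hki ih =>
    have hai' : ¬a ≤ x i := fun h => hai (h.trans (hx.apply_le_apply i.le_succ hir))
    exact ((hx.covBy i (by omega)).covBy_sup_of_not_le (ih (by omega) hai') hai).1

def shiftSup (x : ℕ → L) (a : L) (s j : ℕ) (i : ℕ) : L :=
  if s ≤ i ∧ i < j then x (i - 1) ⊔ a else x i

theorem isCoverSeq_shiftSup (hx : IsCoverSeq r x) {k s j : ℕ} (hk : x k ⋖ x k ⊔ a) (hks : k < s)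
    (hsj : s ≤ j) (hjr : j ≤ r) (haj : a ≤ x j) (ha : ¬a ≤ x (j - 1)) :
    IsCoverSeq r (shiftSup x a s j) := by
  have hna : ∀ i < j, ¬a ≤ x i := fun i hi h =>
    ha (h.trans (hx.apply_le_apply (by omega) (by omega)))
  have hsup : ∀ i, k ≤ i → i < j → x i ⋖ x i ⊔ a := fun i hki hij =>
    hx.covBy_sup hk hki (by omega) (hna i hij)
  have hsup_covBy : ∀ i, k < i → i < j → x (i - 1) ⊔ a ⋖ x i ⊔ a := fun i hki hij => by
    have h := hx.covBy (i - 1) (by omega)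
    rw [Nat.sub_add_cancel (by omega)] at h
    exact (h.covBy_sup_of_not_le (hsup (i - 1) (by omega) (by omega)) (hna i hij)).2
  have hsup_eq : x (j - 1) ⊔ a = x j := by
    have h := hx.covBy (j - 1) (by omega)
    rw [Nat.sub_add_cancel (by omega)] at h
    exact h.sup_eq_of_le (hsup (j - 1) (by omega) (by omega)) haj
  refine ⟨(if_neg (by omega)).trans hx.zero, (if_neg (by omega)).trans hx.last, fun i hi => ?_⟩
  unfold shiftSup
  split_ifs with h₁ h₂ h₂
  · simpa using hsup_covBy i (by omega) h₁.2
  · have hij : i + 1 = j := by omega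
    simpa [hij, ← hsup_eq, show j - 1 = i by omega] using hsup_covBy i (by omega) h₁.2
  · simpa [show s = i + 1 by omega] using hsup i (by omega) (by omega)
  · exact hx.covBy i hi

theorem IsCoverSeq.edist_shiftSup_le (hx : IsCoverSeq r x) {k s j : ℕ} (hk : x k ⋖ x k ⊔ a)
    (hks : k < s) (hsj : s ≤ j) (hjr : j ≤ r) (haj : a ≤ x j) (ha : ¬a ≤ x (j - 1)) :
    (facetRidgeGraph L).edist (isCoverSeq_shiftSup hx hk hks hsj hjr haj ha).maxChain
      hx.maxChain ≤ (j - s : ℕ) := by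
  obtain ⟨d, hd⟩ : ∃ d, j - s = d := ⟨_, rfl⟩
  induction d generalizing s with
  | zero =>
    have h : (isCoverSeq_shiftSup hx hk hks hsj hjr haj ha).maxChain = hx.maxChain :=
      IsCoverSeq.maxChain_eq _ _ fun i _ => if_neg (by omega)
    rw [h, SimpleGraph.edist_self]
    exact zero_le
  | succ d ih =>
    have hstep := (isCoverSeq_shiftSup hx hk hks hsj hjr haj ha).edist_maxChain_le_one
      (isCoverSeq_shiftSup hx hk (by omega) (by omega : s + 1 ≤ j) hjr haj ha) s fun i hi => by
        have : i ≠ s := hi.2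
        unfold shiftSup
        split_ifs <;> first | rfl | omega
    calc _ ≤ _ := SimpleGraph.edist_triangle
      _ ≤ 1 + (j - (s + 1) : ℕ) := add_le_add hstep (ih (by omega) (by omega) (by omega))
      _ = (j - s : ℕ) := by norm_cast; omega

theorem IsCoverSeq.exists_eqOn_Iic_succ {k : ℕ} {y : ℕ → L} (hx : IsCoverSeq r x)
    (hy : IsCoverSeq r y) (hkr : k < r) (hxy : EqOn x y (Iic k)) :
    ∃ (z : ℕ → L) (hz : IsCoverSeq r z),
      (facetRidgeGraph L).edist hx.maxChain hz.maxChain ≤ (r - (k + 1) : ℕ) ∧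
        EqOn z y (Iic (k + 1)) := by
  classical
  set a := y (k + 1)
  have hka : x k ⋖ a := hxy (mem_Iic.2 le_rfl) ▸ hy.covBy k hkr
  have hsup : x k ⊔ a = a := sup_eq_right.2 hka.le
  have hk : x k ⋖ x k ⊔ a := by rwa [hsup]
  have hex : ∃ j, a ≤ x j := ⟨r, hx.last ▸ le_top⟩
  set j := Nat.find hex
  have haj : a ≤ x j := Nat.find_spec hex
  have hjr : j ≤ r := Nat.find_min' hex (hx.last ▸ le_top)
  have hkj : k < j := not_le.1 fun h => hka.lt.not_ge (haj.trans (hx.apply_le_apply h hkr.le))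
  have ha : ¬a ≤ x (j - 1) := Nat.find_min hex (by omega)
  refine ⟨_, isCoverSeq_shiftSup hx hk (Nat.lt_add_one k) hkj hjr haj ha, ?_, fun i hi => ?_⟩
  · rw [SimpleGraph.edist_comm]
    exact (hx.edist_shiftSup_le hk (Nat.lt_add_one k) hkj hjr haj ha).trans (by norm_cast; omega)
  · rw [mem_Iic] at hi
    unfold shiftSup
    split_ifs with h
    · rw [show i = k + 1 by omega, Nat.add_sub_cancel, hsup]
    · rcases Nat.lt_or_ge i (k + 1) with hik | hik
      · exact hxy (mem_Iic.2 (by omega))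
      · rw [show i = k + 1 by omega, ← (hx.covBy k hkr).sup_eq_of_le hk
          (show j = k + 1 by omega ▸ haj), hsup]

theorem IsCoverSeq.edist_maxChain_le_choose {k : ℕ} {y : ℕ → L} (hx : IsCoverSeq r x)
    (hy : IsCoverSeq r y) (hxy : EqOn x y (Iic k)) :
    (facetRidgeGraph L).edist hx.maxChain hy.maxChain ≤ ((r - k).choose 2 : ℕ) := by
  obtain ⟨m, hm⟩ : ∃ m, r - k = m := ⟨_, rfl⟩
  induction m generalizing k x with
  | zero =>
    rw [hx.maxChain_eq hy fun i hi => hxy (mem_Iic.2 (by rw [mem_Iic] at hi; omega)),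
      SimpleGraph.edist_self]
    exact zero_le
  | succ m ih =>
    obtain ⟨z, hz, hxz, hzy⟩ := hx.exists_eqOn_Iic_succ hy (by omega) hxy
    calc _ ≤ _ := SimpleGraph.edist_triangle
      _ ≤ (r - (k + 1) : ℕ) + ((r - (k + 1)).choose 2 : ℕ) :=
        add_le_add hxz (ih hz hzy (by omega))
      _ = ((r - k).choose 2 : ℕ) := by
        rw [hm, show r - (k + 1) = m by omega, Nat.choose_succ_succ', Nat.choose_one_right]
        push_cast
        rfl

end Shift

end BoundedOrder

end Lattice

/-- The facet-ridge incidence graph of the order complex of a finite geometric lattice of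
rank `r` has diameter at most `r.choose 2`: any two maximal chains are connected by a path
of length at most `r.choose 2`. -/
theorem stmt0 (L : Type*) [Lattice L] [Fintype L] [BoundedOrder L] (r : ℕ)
    (hgeo : IsGeometricLattice L)
    (hrank : ∀ c : Set L, IsMaxChain (· ≤ ·) c → c.ncard = r + 1) :
    ∀ c c' : {c : Set L // IsMaxChain (· ≤ ·) c},
      ∃ w : (facetRidgeGraph L).Walk c c', w.length ≤ r.choose 2 := by
  have := hgeo.isWeakUpperModularLattice
  intro c c'
  obtain ⟨x, hx, rfl⟩ := IsCoverSeq.exists_maxChain_eq c (hrank c.1 c.2)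
  obtain ⟨y, hy, rfl⟩ := IsCoverSeq.exists_maxChain_eq c' (hrank c'.1 c'.2)
  apply SimpleGraph.exists_walk_length_le_of_edist_le
  simpa using hx.edist_maxChain_le_choose hy (k := 0) (by simp [EqOn, hx.zero, hy.zero])
end

section
/- Let L be a finite geometric lattice of rank r equipped with the minimal labeling induced by any linear order on its atoms. Then every maximal chain of L is at distance at most binom(r,2) from the unique ascending chain of L in the facet-ridge incidence graph of the order complex of L. -/
/-- `lab` is the minimal labeling induced by the linear order on the atoms of `L`
represented by the function `f` (injective on atoms): for every cover relation `u ⋖ v`,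
`lab u v` is the atom `a ≤ v` with `a ≰ u` having the least value of `f`. -/
def IsMinimalLabeling {L : Type*} [Lattice L] [OrderBot L] (f : L → ℕ) (lab : L → L → L) : Prop :=
  ∀ u v : L, u ⋖ v →
    IsAtom (lab u v) ∧ lab u v ≤ v ∧ ¬ lab u v ≤ u ∧
    ∀ a : L, IsAtom a → a ≤ v → ¬ a ≤ u → f (lab u v) ≤ f a

/-- `g` is a maximal chain `⊥ = g 0 ⋖ g 1 ⋖ ⋯ ⋖ g r = ⊤`. -/
def IsMaxChainFun {L : Type*} [PartialOrder L] [BoundedOrder L] (r : ℕ)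
    (g : Fin (r+1) → L) : Prop :=
  g 0 = ⊥ ∧ g (Fin.last r) = ⊤ ∧ ∀ i : Fin r, g i.castSucc ⋖ g i.succ

/-- The label sequence of the maximal chain `g` with respect to the labeling `lab`. -/
def labelSeq {L : Type*} (lab : L → L → L) {r : ℕ} (g : Fin (r+1) → L) (i : Fin r) : L :=
  lab (g i.castSucc) (g i.succ)

/-- The facet-ridge incidence graph of the order complex of a graded bounded poset of rank
`r`: vertices are the maximal chains of `L`, two maximal chains being adjacent iff they
differ in exactly one element. -/
def chainGraph (L : Type*) [PartialOrder L] [BoundedOrder L] (r : ℕ) :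
    SimpleGraph {g : Fin (r+1) → L // IsMaxChainFun r g} where
  Adj M M' := ∃ i : Fin (r+1), M.1 i ≠ M'.1 i ∧ ∀ j : Fin (r+1), j ≠ i → M.1 j = M'.1 j
  symm := by
    constructor
    rintro M M' ⟨i, h1, h2⟩
    exact ⟨i, h1.symm, fun j hj => (h2 j hj).symm⟩
  loopless := by
    constructor
    rintro M ⟨i, h1, -⟩
    exact h1 rfl

open SimpleGraph

def IsSemimodular (L : Type*) [Lattice L] : Prop :=
  ∀ x y y' : L, y ≠ y' → x ⋖ y → x ⋖ y' → y ⋖ y ⊔ y' ∧ y' ⋖ y ⊔ y'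

section Lattice

variable {L : Type*} [Lattice L] {a u x y y' z : L}

theorem CovBy.eq_of_le_of_le_of_not_le (hy : x ⋖ y) (hy' : x ⋖ y') (hay : a ≤ y)
    (hay' : a ≤ y') (hax : ¬ a ≤ x) : y = y' := by
  have hlt : x < y ⊓ y' :=
    lt_of_le_of_ne (le_inf hy.le hy'.le) fun h => hax (h ▸ le_inf hay hay')
  have h₁ := (hy.eq_or_eq hlt.le inf_le_left).resolve_left hlt.ne'
  have h₂ := (hy'.eq_or_eq hlt.le inf_le_right).resolve_left hlt.ne'
  exact h₁.symm.trans h₂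

theorem IsSemimodular.covBy_sup_of_isAtom [OrderBot L] [Finite L] (hsm : IsSemimodular L)
    (ha : IsAtom a) : ∀ {x : L}, ¬ a ≤ x → x ⋖ x ⊔ a := by
  intro x
  induction x using WellFoundedLT.induction with
  | _ x ih =>
    intro hax
    rcases eq_or_ne x ⊥ with rfl | hx
    · simpa using ha.bot_covBy
    obtain ⟨u, hux⟩ := exists_covBy_of_wellFoundedGT (not_isMin_iff_ne_bot.2 hx)
    have hau : ¬ a ≤ u := fun h => hax (h.trans hux.le)
    have hne : x ≠ u ⊔ a := fun h => hax (h ▸ le_sup_right)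
    have := (hsm u x (u ⊔ a) hne hux (ih u hux.lt hau)).1
    rwa [← sup_assoc, sup_eq_left.2 hux.le] at this

theorem IsSemimodular.sup_covBy_of_isAtom [OrderBot L] [Finite L] (hsm : IsSemimodular L)
    (ha : IsAtom a) (hxu : x ⋖ u) (huz : u ⋖ z) (haz : a ≤ z) (hau : ¬ a ≤ u) :
    x ⊔ a ⋖ z := by
  have hxa : x ⋖ x ⊔ a := hsm.covBy_sup_of_isAtom ha fun h => hau (h.trans hxu.le)
  have hne : u ≠ x ⊔ a := fun h => hau (h ▸ le_sup_right)
  obtain ⟨hu, hxa'⟩ := hsm x u (x ⊔ a) hne hxu hxa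
  rwa [hu.eq_of_le_of_le_of_not_le huz (le_sup_of_le_right le_sup_right) haz hau] at hxa'

theorem IsGeometricLattice.isSemimodular [BoundedOrder L] (hgeo : IsGeometricLattice L) :
    IsSemimodular L :=
  hgeo.2

theorem IsGeometricLattice.exists_isAtom_le_not_le [BoundedOrder L] (hgeo : IsGeometricLattice L)
    {u v : L} (h : ¬ v ≤ u) : ∃ a, IsAtom a ∧ a ≤ v ∧ ¬ a ≤ u := by
  obtain ⟨s, hs, rfl⟩ := hgeo.1 v
  by_contra! H
  exact h (Finset.sup_le fun a ha => H a (hs a ha) (Finset.le_sup (f := id) ha))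

end Lattice

section Chains

variable {L : Type*} [PartialOrder L] [BoundedOrder L] {r : ℕ}

theorem IsMaxChainFun.of_clamp {g : Fin (r + 1) → L} (h₀ : g (Fin.clamp 0 r) = ⊥)
    (h₁ : g (Fin.clamp r r) = ⊤) (h : ∀ n < r, g (Fin.clamp n r) ⋖ g (Fin.clamp (n + 1) r)) :
    IsMaxChainFun r g := by
  refine ⟨h₀, by rwa [Fin.clamp_eq_last r r le_rfl] at h₁, fun i => ?_⟩
  have hi : Fin.clamp i r = i.castSucc := by ext; simp
  have hi' : Fin.clamp (i + 1) r = i.succ := by ext; simp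
  simpa only [hi, hi'] using h i i.2

abbrev MaxChain (L : Type*) [PartialOrder L] [BoundedOrder L] (r : ℕ) :=
  {g : Fin (r + 1) → L // IsMaxChainFun r g}

namespace MaxChain

variable (M : MaxChain L r)

/-- Indexing by `ℕ`, clamped at `r`, keeps the rank arithmetic out of `Fin`. -/
def level (n : ℕ) : L :=
  M.1 (Fin.clamp n r)

theorem level_zero : M.level 0 = ⊥ := M.2.1

theorem level_of_le {n : ℕ} (h : r ≤ n) : M.level n = ⊤ := by
  rw [level, Fin.clamp_eq_last _ _ h]
  exact M.2.2.1

theorem level_covBy {n : ℕ} (h : n < r) : M.level n ⋖ M.level (n + 1) := by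
  have hn : Fin.clamp n r = (⟨n, h⟩ : Fin r).castSucc := by ext; simp; omega
  have hn' : Fin.clamp (n + 1) r = (⟨n, h⟩ : Fin r).succ := by ext; simp; omega
  simpa only [level, hn, hn'] using M.2.2.2 ⟨n, h⟩

theorem level_mono : Monotone M.level :=
  monotone_nat_of_le_succ fun n => by
    rcases lt_or_ge n r with h | h
    · exact (M.level_covBy h).le
    · rw [M.level_of_le h, M.level_of_le (by omega)]

theorem ext_level {M N : MaxChain L r} (h : ∀ n ≤ r, M.level n = N.level n) : M = N := by
  ext1
  funext i
  have hi : Fin.clamp i r = i := by ext; simp; omega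
  simpa only [level, hi] using h i (by omega)

theorem exists_adj {n : ℕ} (hn : n + 1 < r) {y : L} (h₁ : M.level n ⋖ y)
    (h₂ : y ⋖ M.level (n + 2)) (hy : y ≠ M.level (n + 1)) :
    ∃ M' : MaxChain L r, (chainGraph L r).Adj M M' ∧ M'.level (n + 1) = y ∧
      ∀ m ≠ n + 1, M'.level m = M.level m := by
  set g := Function.update M.1 (Fin.clamp (n + 1) r) y
  have hg : ∀ m, g (Fin.clamp m r) = if m = n + 1 then y else M.level m := by
    intro m
    have : Fin.clamp m r = Fin.clamp (n + 1) r ↔ m = n + 1 := by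
      simp only [Fin.ext_iff, Fin.coe_clamp]; omega
    simp only [g, Function.update_apply, this, level]
  have hchain : IsMaxChainFun r g := by
    refine .of_clamp ?_ ?_ fun m hm => ?_
    · rw [hg, if_neg (by omega), M.level_zero]
    · rw [hg, if_neg (by omega), M.level_of_le le_rfl]
    · rw [hg, hg]
      rcases eq_or_ne m n with rfl | hmn
      · simpa using h₁
      rcases eq_or_ne m (n + 1) with rfl | hmn'
      · simpa using h₂
      rw [if_neg hmn', if_neg (by omega)]
      exact M.level_covBy hm
  refine ⟨⟨g, hchain⟩, ⟨Fin.clamp (n + 1) r, ?_, fun j hj => ?_⟩, ?_, fun m hm => ?_⟩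
  · show M.level (n + 1) ≠ g (Fin.clamp (n + 1) r)
    rw [hg, if_pos rfl]
    exact hy.symm
  · simp [g, hj]
  · exact (hg (n + 1)).trans (if_pos rfl)
  · exact (hg m).trans (if_neg hm)

end MaxChain

end Chains

section Geometric

variable {L : Type*} [Lattice L] [BoundedOrder L] [Finite L] {r : ℕ}

theorem IsSemimodular.exists_walk_atom_le_level (hsm : IsSemimodular L) {a : L} (ha : IsAtom a)
    {k : ℕ} : ∀ (d : ℕ) (M : MaxChain L r), ¬ a ≤ M.level k → a ≤ M.level (k + d + 1) →
      ∃ (M' : MaxChain L r) (w : (chainGraph L r).Walk M M'), w.length ≤ d ∧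
        (∀ j ≤ k, M'.level j = M.level j) ∧ a ≤ M'.level (k + 1)
  | 0, M, _, haM => ⟨M, .nil, le_rfl, fun _ _ => rfl, haM⟩
  | d + 1, M, hak, haM => by
    by_cases hprev : a ≤ M.level (k + d + 1)
    · obtain ⟨M', w, hw, hagree, ha'⟩ := hsm.exists_walk_atom_le_level ha d M hak hprev
      exact ⟨M', w, by omega, hagree, ha'⟩
    have hlt : k + d + 1 < r := by
      by_contra! h
      exact hprev (M.level_of_le h ▸ le_top)
    have hnot : ¬ a ≤ M.level (k + d) := fun h => hprev (h.trans (M.level_mono (by omega)))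
    obtain ⟨M₁, hadj, hM₁, hsame⟩ := M.exists_adj hlt (hsm.covBy_sup_of_isAtom ha hnot)
      (hsm.sup_covBy_of_isAtom ha (M.level_covBy (by omega)) (M.level_covBy hlt) haM hprev)
      (fun h => hprev (h ▸ le_sup_right))
    obtain ⟨M', w, hw, hagree, ha'⟩ := hsm.exists_walk_atom_le_level ha d M₁
      (by rwa [hsame k (by omega)]) (by rw [hM₁]; exact le_sup_right)
    exact ⟨M', .cons hadj w, by simp only [Walk.length_cons]; omega,
      fun j hj => (hagree j hj).trans (hsame j (by omega)), ha'⟩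

theorem IsGeometricLattice.exists_walk_length_le_choose_of_level_eq (hgeo : IsGeometricLattice L)
    (C : MaxChain L r) : ∀ (t k : ℕ) (M : MaxChain L r), k + t = r →
      (∀ j ≤ k, M.level j = C.level j) → ∃ w : (chainGraph L r).Walk M C, w.length ≤ t.choose 2
  | 0, k, M, hkr, hagree => by
    obtain rfl : M = C := MaxChain.ext_level fun n hn => hagree n (by omega)
    exact ⟨.nil, by simp⟩
  | t + 1, k, M, hkr, hagree => by
    have hC := C.level_covBy (n := k) (by omega)
    obtain ⟨a, ha, haC, haCk⟩ := hgeo.exists_isAtom_le_not_le hC.lt.not_ge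
    obtain ⟨M', w₁, hw₁, hagree', haM'⟩ := hgeo.isSemimodular.exists_walk_atom_le_level ha t M
      (by rwa [hagree k le_rfl]) (by rw [M.level_of_le (by omega)]; exact le_top)
    have hMk : M'.level k = C.level k := (hagree' k le_rfl).trans (hagree k le_rfl)
    have hMk₁ : M'.level (k + 1) = C.level (k + 1) :=
      (hMk ▸ M'.level_covBy (by omega)).eq_of_le_of_le_of_not_le hC haM' haC haCk
    obtain ⟨w₂, hw₂⟩ := hgeo.exists_walk_length_le_choose_of_level_eq C t (k + 1) M' (by omega)
      fun j hj => by
        rcases hj.lt_or_eq with hj | rfl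
        · exact (hagree' j (by omega)).trans (hagree j (by omega))
        · exact hMk₁
    have hchoose : (t + 1).choose 2 = t + t.choose 2 := by
      rw [Nat.choose_succ_succ', Nat.choose_one_right]
    exact ⟨w₁.append w₂, by rw [Walk.length_append, hchoose]; omega⟩

theorem IsGeometricLattice.exists_walk_length_le_choose (hgeo : IsGeometricLattice L)
    (M C : MaxChain L r) : ∃ w : (chainGraph L r).Walk M C, w.length ≤ r.choose 2 :=
  hgeo.exists_walk_length_le_choose_of_level_eq C r 0 M (zero_add r) fun j hj => by
    rw [Nat.le_zero.1 hj, M.level_zero, C.level_zero]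

end Geometric

theorem stmt1_general (L : Type*) [Lattice L] [Fintype L] [BoundedOrder L] (r : ℕ)
    (hgeo : IsGeometricLattice L)
    (C : {g : Fin (r+1) → L // IsMaxChainFun r g})
    (M : {g : Fin (r+1) → L // IsMaxChainFun r g}) :
    ∃ w : (chainGraph L r).Walk M C, w.length ≤ r.choose 2 :=
  hgeo.exists_walk_length_le_choose M C

/-- In a finite geometric lattice of rank `r` with the minimal labeling induced by a
linear order on its atoms, every maximal chain is at distance at most `r.choose 2` from
the unique ascending chain, in the facet-ridge incidence graph of the order complex. -/
theorem stmt1 (L : Type*) [Lattice L] [Fintype L] [BoundedOrder L] (r : ℕ)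
    (hgeo : IsGeometricLattice L)
    (hrank : ∀ c : Set L, IsMaxChain (· ≤ ·) c → c.ncard = r + 1)
    (f : L → ℕ) (hf : Set.InjOn f {a : L | IsAtom a})
    (lab : L → L → L) (hlab : IsMinimalLabeling f lab)
    (C : {g : Fin (r+1) → L // IsMaxChainFun r g})
    (hC : Monotone fun i => f (labelSeq lab C.1 i))
    (M : {g : Fin (r+1) → L // IsMaxChainFun r g}) :
    ∃ w : (chainGraph L r).Walk M C, w.length ≤ r.choose 2 :=
  stmt1_general L r hgeo C M
end

section
/- Let L be a finite geometric lattice. For every linear order on the set of atoms of L, the induced minimal labeling of L is an EL-labeling. -/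
set_option linter.unusedSectionVars false
set_option linter.unreachableTactic false
set_option linter.unusedTactic false



/-- A saturated chain from `u` to `v`, as a list `u = c_0 ⋖ c_1 ⋖ ⋯ ⋖ c_k = v`. -/
def IsSaturatedChain {L : Type*} [PartialOrder L] (u v : L) (c : List L) : Prop :=
  c.Chain' (· ⋖ ·) ∧ c.head? = some u ∧ c.getLast? = some v

/-- The label sequence of a saturated chain given as a list, read through `f`. -/
def labelList {L : Type*} (f : L → ℕ) (lab : L → L → L) (c : List L) : List ℕ :=
  (List.zipWith lab c c.tail).map f

section Aux

variable {L : Type*} [Lattice L] [Fintype L] [BoundedOrder L]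

lemma labelList_cons_cons {f : L → ℕ} {lab : L → L → L} (a b : L) (l : List L) :
    labelList f lab (a :: b :: l) = f (lab a b) :: labelList f lab (b :: l) := rfl

lemma aux_cover_sup_atom (hgeo : IsGeometricLattice L) :
    ∀ x a : L, IsAtom a → ¬ a ≤ x → x ⋖ x ⊔ a := by
  intro x
  refine WellFounded.induction (C := fun x : L => ∀ a : L, IsAtom a → ¬ a ≤ x → x ⋖ x ⊔ a)
    (wellFounded_lt (α := L)) x ?_
  intro x IH a ha hax
  rcases eq_or_ne x ⊥ with rfl | hx
  · simpa using ha.bot_covBy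
  · obtain ⟨x', -, hx'cov⟩ := exists_le_covBy_of_lt (Ne.bot_lt hx)
    -- find an atom b ≤ x with ¬ b ≤ x'
    obtain ⟨s, hs, hsup⟩ := hgeo.1 x
    have hb : ∃ b ∈ s, ¬ b ≤ x' := by
      by_contra h
      push_neg at h
      exact absurd (hsup ▸ Finset.sup_le fun b hbs => h b hbs) hx'cov.lt.not_ge
    obtain ⟨b, hbs, hbx'⟩ := hb
    have hbx : b ≤ x := hsup ▸ Finset.le_sup (f := id) hbs
    have hax' : ¬ a ≤ x' := fun h => hax (h.trans hx'cov.le)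
    have hcov2 : x' ⋖ x' ⊔ a := IH x' hx'cov.lt a ha hax'
    have hne : x ≠ x' ⊔ a := by
      rintro rfl; exact hax le_sup_right
    have := (hgeo.2 x' x (x' ⊔ a) hne hx'cov hcov2).1
    have heq : x ⊔ (x' ⊔ a) = x ⊔ a := by
      rw [← sup_assoc, sup_eq_left.2 hx'cov.le]
    rwa [heq] at this

lemma aux_decomp {u v : L} {c : List L} (h : IsSaturatedChain u v c) :
    (u = v ∧ c = [u]) ∨
      ∃ x l, c = u :: x :: l ∧ u ⋖ x ∧ IsSaturatedChain x v (x :: l) := by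
  obtain ⟨hc, hh, hl⟩ := h
  match c with
  | [] => simp at hh
  | [y] =>
    simp only [List.head?] at hh
    simp only [List.getLast?] at hl
    obtain rfl : y = u := by injection hh
    obtain rfl : y = v := by simpa using hl
    exact Or.inl ⟨rfl, rfl⟩
  | y :: x :: l =>
    obtain rfl : y = u := by injection hh
    obtain ⟨h1, h2⟩ := List.isChain_cons_cons.mp hc
    refine Or.inr ⟨x, l, rfl, h1, h2, rfl, ?_⟩
    rwa [List.getLast?_cons_cons] at hl

lemma aux_chain_le : ∀ (c : List L) (w v : L), IsSaturatedChain w v c → w ≤ v := by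
  intro c
  induction c with
  | nil => intro w v h; simp [IsSaturatedChain] at h
  | cons y t IHt =>
    intro w v h
    rcases aux_decomp h with ⟨rfl, -⟩ | ⟨x, l, heq, hcov, hsat⟩
    · exact le_rfl
    · obtain ⟨rfl, rfl⟩ : y = w ∧ t = x :: l := by
        constructor <;> [skip; skip] <;> injection heq with h1 h2 <;> simp_all
      exact hcov.le.trans (IHt x v hsat)

lemma aux_self {v : L} {c : List L} (h : IsSaturatedChain v v c) : c = [v] := by
  rcases aux_decomp h with ⟨-, rfl⟩ | ⟨x, l, heq, hcov, hsat⟩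
  · rfl
  · exact absurd (aux_chain_le _ _ _ hsat) hcov.lt.not_ge

lemma aux_first_label {f : L → ℕ} {lab : L → L → L} (hlab : IsMinimalLabeling f lab) :
    ∀ (l : List L) (w x v a : L), IsSaturatedChain w v (w :: x :: l) →
      (labelList f lab (w :: x :: l)).Chain' (· ≤ ·) →
      IsAtom a → a ≤ v → ¬ a ≤ w → f (lab w x) ≤ f a := by
  intro l
  induction l with
  | nil =>
    intro w x v a hsat hinc ha hav hau
    have hcov : w ⋖ x := List.isChain_pair.mp hsat.1
    obtain rfl : x = v := by simpa using hsat.2.2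
    exact (hlab w x hcov).2.2.2 a ha hav hau
  | cons x' l' IHl =>
    intro w x v a hsat hinc ha hav hau
    obtain ⟨hcov, hc2⟩ := List.isChain_cons_cons.mp hsat.1
    by_cases hax : a ≤ x
    · exact (hlab w x hcov).2.2.2 a ha hax hau
    · have hsat2 : IsSaturatedChain x v (x :: x' :: l') := by
        refine ⟨hc2, rfl, ?_⟩
        have := hsat.2.2
        rwa [List.getLast?_cons_cons] at this
      have hinc2 : (labelList f lab (x :: x' :: l')).Chain' (· ≤ ·) := by
        rw [labelList_cons_cons] at hinc
        exact hinc.tail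
      have h1 : f (lab x x') ≤ f a := IHl x x' v a hsat2 hinc2 ha hav hax
      have h2 : f (lab w x) ≤ f (lab x x') := by
        rw [labelList_cons_cons, labelList_cons_cons] at hinc
        exact (List.isChain_cons_cons.mp hinc).1
      exact h2.trans h1

end Aux

/-- Björner: the minimal labeling induced by any linear order on the atoms of a finite
geometric lattice is an EL-labeling: every interval `[u,v]` has a unique saturated chain
with weakly increasing label sequence, and that chain's label sequence is strictly
lexicographically smaller than that of every other saturated chain from `u` to `v`. -/
theorem stmt5 (L : Type*) [Lattice L] [Fintype L] [BoundedOrder L]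
    (hgeo : IsGeometricLattice L)
    (f : L → ℕ) (hf : Set.InjOn f {a : L | IsAtom a})
    (lab : L → L → L) (hlab : IsMinimalLabeling f lab) :
    ∀ u v : L, u < v →
      ∃ c : List L,
        (IsSaturatedChain u v c ∧ (labelList f lab c).Chain' (· ≤ ·)) ∧
        (∀ c' : List L, IsSaturatedChain u v c' →
          (labelList f lab c').Chain' (· ≤ ·) → c' = c) ∧
        (∀ c' : List L, IsSaturatedChain u v c' → c' ≠ c →
          List.Lex (· < ·) (labelList f lab c) (labelList f lab c')) := by
  classical
  intro u
  refine WellFounded.induction (C := fun u : L => ∀ v : L, u < v →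
      ∃ c : List L,
        (IsSaturatedChain u v c ∧ (labelList f lab c).Chain' (· ≤ ·)) ∧
        (∀ c' : List L, IsSaturatedChain u v c' →
          (labelList f lab c').Chain' (· ≤ ·) → c' = c) ∧
        (∀ c' : List L, IsSaturatedChain u v c' → c' ≠ c →
          List.Lex (· < ·) (labelList f lab c) (labelList f lab c')))
    (wellFounded_gt (α := L)) u ?_
  intro u IH v huv
  -- the f-minimal atom `a ≤ v`, `a ≰ u`
  obtain ⟨s, hs, hsup⟩ := hgeo.1 v
  have hSne : ∃ b, IsAtom b ∧ b ≤ v ∧ ¬ b ≤ u := by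
    by_contra h
    push_neg at h
    have hvu : v ≤ u := hsup ▸ Finset.sup_le fun b hbs =>
      h b (hs b hbs) (hsup ▸ Finset.le_sup (f := id) hbs)
    exact absurd hvu huv.not_ge
  set S : Finset L := Finset.univ.filter (fun b => IsAtom b ∧ b ≤ v ∧ ¬ b ≤ u) with hS
  have hSne' : S.Nonempty := by
    obtain ⟨b, hb⟩ := hSne; exact ⟨b, by simp [hS, hb.1, hb.2.1, hb.2.2]⟩
  obtain ⟨a, haS, hamin'⟩ := S.exists_min_image f hSne'
  rw [hS, Finset.mem_filter] at haS
  obtain ⟨-, ha, hav, hau⟩ := haS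
  have hamin : ∀ b : L, IsAtom b → b ≤ v → ¬ b ≤ u → f a ≤ f b := fun b h1 h2 h3 =>
    hamin' b (by simp [hS, h1, h2, h3])
  have hcov : u ⋖ u ⊔ a := aux_cover_sup_atom hgeo u a ha hau
  set u₁ := u ⊔ a with hu₁def
  have hu₁v : u₁ ≤ v := sup_le huv.le hav
  have hl1 : lab u u₁ = a := by
    obtain ⟨hA, hle, hnle, hmin⟩ := hlab u u₁ hcov
    exact hf hA ha (le_antisymm (hmin a ha le_sup_right hau)
      (hamin _ hA (hle.trans hu₁v) hnle))
  have hx_facts : ∀ x : L, u ⋖ x → x ≤ v →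
      f a ≤ f (lab u x) ∧ (f (lab u x) ≤ f a → x = u₁) := by
    intro x hcx hxv
    obtain ⟨hA, hle, hnle, hmin⟩ := hlab u x hcx
    have h1 : f a ≤ f (lab u x) := hamin _ hA (hle.trans hxv) hnle
    refine ⟨h1, fun h2 => ?_⟩
    have hlx : lab u x = a := hf hA ha (le_antisymm h2 h1)
    have hu₁x : u₁ ≤ x := sup_le hcx.le (hlx ▸ hle)
    rcases hcx.eq_or_eq le_sup_left hu₁x with h | h
    · exact absurd h hcov.lt.ne'
    · exact h.symm
  rcases eq_or_lt_of_le hu₁v with heq | hlt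
  · -- base case: u ⋖ u₁ = v
    subst heq
    have hsatc : IsSaturatedChain u u₁ [u, u₁] :=
      ⟨List.isChain_pair.mpr hcov, rfl, by simp⟩
    refine ⟨[u, u₁], ⟨hsatc, ?_⟩, ?_, ?_⟩
    · exact List.isChain_singleton _
    · intro c' hsat' hinc'
      rcases aux_decomp hsat' with ⟨h, -⟩ | ⟨x, l, hceq, hcx, hsatx⟩
      · exact absurd h huv.ne
      subst hceq
      have hfl : f (lab u x) ≤ f a :=
        aux_first_label hlab l u x u₁ a hsat' hinc' ha hav hau
      have hx : x = u₁ := (hx_facts x hcx (aux_chain_le _ _ _ hsatx)).2 hfl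
      subst hx
      have := aux_self hsatx
      injection this with _ h2
      rw [h2]
    · intro c' hsat' hnec
      rcases aux_decomp hsat' with ⟨h, -⟩ | ⟨x, l, hceq, hcx, hsatx⟩
      · exact absurd h huv.ne
      subst hceq
      have hxv : x ≤ u₁ := aux_chain_le _ _ _ hsatx
      obtain ⟨h1, h2⟩ := hx_facts x hcx hxv
      have hLL : labelList f lab [u, u₁] = [f a] := by
        rw [show ([u, u₁] : List L) = u :: u₁ :: [] from rfl, labelList_cons_cons, hl1]; rfl
      rw [hLL, labelList_cons_cons]
      rcases lt_or_ge (f a) (f (lab u x)) with hlt' | hle'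
      · exact List.Lex.rel hlt'
      · exfalso
        have hx : x = u₁ := h2 hle'
        subst hx
        have := aux_self hsatx
        injection this with _ h2'
        exact hnec (by rw [h2'])
  · -- inductive case: u₁ < v
    obtain ⟨c₁, ⟨hc₁sat, hc₁inc⟩, hc₁uniq, hc₁lex⟩ := IH u₁ hcov.lt v hlt
    rcases aux_decomp hc₁sat with ⟨heq', -⟩ | ⟨x₂, l₂, hc₁eq, hcx₂, hsatx₂⟩
    · exact absurd heq' hlt.ne
    have hx₂v : x₂ ≤ v := aux_chain_le _ _ _ hsatx₂
    have hheadle : f (lab u u₁) ≤ f (lab u₁ x₂) := by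
      obtain ⟨hA, hle, hnle, -⟩ := hlab u₁ x₂ hcx₂
      rw [hl1]
      exact hamin _ hA (hle.trans hx₂v) fun h => hnle (h.trans le_sup_left)
    have hsatc : IsSaturatedChain u v (u :: c₁) := by
      refine ⟨?_, rfl, ?_⟩
      · rw [hc₁eq]
        exact List.isChain_cons_cons.mpr ⟨hcov, hc₁eq ▸ hc₁sat.1⟩
      · rw [hc₁eq, List.getLast?_cons_cons]
        exact hc₁eq ▸ hc₁sat.2.2
    have hcons : labelList f lab (u :: c₁) = f (lab u u₁) :: labelList f lab c₁ := by
      rw [hc₁eq]; rfl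
    refine ⟨u :: c₁, ⟨hsatc, ?_⟩, ?_, ?_⟩
    · rw [hcons]
      refine List.isChain_cons.mpr ⟨?_, hc₁inc⟩
      intro b hb
      rw [hc₁eq] at hb
      simp only [labelList_cons_cons, List.head?_cons, Option.mem_def, Option.some.injEq] at hb
      exact hb ▸ hheadle
    · intro c' hsat' hinc'
      rcases aux_decomp hsat' with ⟨h, -⟩ | ⟨x, l, hceq, hcx, hsatx⟩
      · exact absurd h huv.ne
      subst hceq
      have hfl : f (lab u x) ≤ f a :=
        aux_first_label hlab l u x v a hsat' hinc' ha hav hau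
      have hx : x = u₁ := (hx_facts x hcx (aux_chain_le _ _ _ hsatx)).2 hfl
      subst hx
      have hincx : (labelList f lab (u₁ :: l)).Chain' (· ≤ ·) := by
        rw [labelList_cons_cons] at hinc'
        exact hinc'.tail
      rw [hc₁uniq (u₁ :: l) hsatx hincx]
    · intro c' hsat' hnec
      rcases aux_decomp hsat' with ⟨h, -⟩ | ⟨x, l, hceq, hcx, hsatx⟩
      · exact absurd h huv.ne
      subst hceq
      have hxv : x ≤ v := aux_chain_le _ _ _ hsatx
      obtain ⟨h1, h2⟩ := hx_facts x hcx hxv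
      rw [hcons, labelList_cons_cons, hl1]
      rcases lt_or_ge (f a) (f (lab u x)) with hlt' | hle'
      · exact List.Lex.rel hlt'
      · have hx : x = u₁ := h2 hle'
        subst hx
        rw [hl1]
        exact List.Lex.cons (hc₁lex (u₁ :: l) hsatx (fun h => hnec (by rw [h])))
end

section
/- Let L be a finite geometric lattice of rank r and let M : ⊥ = x_0 ⋖ x_1 ⋖ ⋯ ⋖ x_r = ⊤ be any maximal chain of L. Then there exists a linear order on the set of atoms of L such that, for the induced minimal labeling, the label sequence of M is weakly increasing; hence M is the unique ascending chain of that minimal labeling. -/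
/-- For every maximal chain `g` of a finite geometric lattice of rank `r` there is a
linear order on the atoms (represented by `f`, injective on atoms) such that for the
induced minimal labeling the label sequence of `g` is weakly increasing; hence `g` is the
unique ascending chain of that labeling. -/
theorem stmt6 (L : Type*) [Lattice L] [Fintype L] [BoundedOrder L] (r : ℕ)
    (hgeo : IsGeometricLattice L)
    (hrank : ∀ c : Set L, IsMaxChain (· ≤ ·) c → c.ncard = r + 1)
    (g : Fin (r+1) → L) (hg : IsMaxChainFun r g) :
    ∃ f : L → ℕ, Set.InjOn f {a : L | IsAtom a} ∧
      ∀ lab : L → L → L, IsMinimalLabeling f lab →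
        (Monotone fun i => f (labelSeq lab g i)) ∧
        ∀ g' : Fin (r+1) → L, IsMaxChainFun r g' →
          (Monotone fun i => f (labelSeq lab g' i)) → g' = g := by
  classical
  obtain ⟨h0, hlast, hcov⟩ := hg
  have gmono : Monotone g := by
    have hsm : StrictMono g := by
      rw [Fin.strictMono_iff_lt_succ]
      exact fun i => (hcov i).lt
    exact hsm.monotone
  set N := Fintype.card L with hN
  set idx : L → ℕ := fun a => ((Fintype.equivFin L) a).val with hidx
  have idxlt : ∀ a, idx a < N := fun a => ((Fintype.equivFin L) a).isLt
  have idxinj : Function.Injective idx := fun a b h =>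
    (Fintype.equivFin L).injective (Fin.ext h)
  have hex : ∀ a : L, ∃ n, ∃ h : n < r+1, a ≤ g ⟨n, h⟩ := by
    intro a
    refine ⟨r, by omega, ?_⟩
    rw [show (⟨r, by omega⟩ : Fin (r+1)) = Fin.last r from rfl, hlast]
    exact le_top
  set φ : L → ℕ := fun a => Nat.find (hex a) with hφ
  have hφ_spec : ∀ a, ∃ h : φ a < r+1, a ≤ g ⟨φ a, h⟩ := fun a => Nat.find_spec (hex a)
  have hφ_le : ∀ a (i : Fin (r+1)), a ≤ g i → φ a ≤ i.val := by
    intro a i h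
    exact Nat.find_le ⟨i.isLt, by rwa [Fin.eta]⟩
  have hφ_gt : ∀ a (i : Fin (r+1)), ¬ a ≤ g i → i.val < φ a := by
    intro a i h
    by_contra hle
    push_neg at hle
    obtain ⟨hlt, hle2⟩ := hφ_spec a
    exact h (le_trans hle2 (gmono (show (⟨φ a, hlt⟩ : Fin (r+1)) ≤ i from hle)))
  set f : L → ℕ := fun a => φ a * N + idx a with hf
  have finj : Function.Injective f := by
    intro a b h
    apply idxinj
    have h1 : (φ a * N + idx a) % N = (φ b * N + idx b) % N := by
      rw [show φ a * N + idx a = f a from rfl, show φ b * N + idx b = f b from rfl, h]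
    rw [Nat.mul_comm (φ a) N, Nat.mul_comm (φ b) N] at h1
    rwa [Nat.mul_add_mod, Nat.mul_add_mod, Nat.mod_eq_of_lt (idxlt a),
      Nat.mod_eq_of_lt (idxlt b)] at h1
  have fφ : ∀ a b : L, f a ≤ f b → φ a ≤ φ b := by
    intro a b h
    by_contra hc
    push_neg at hc
    have h2 : (φ b + 1) * N ≤ φ a * N := Nat.mul_le_mul_right N hc
    have h3 : φ b * N + idx b < φ b * N + N := by have := idxlt b; omega
    have h4 : φ b * N + N = (φ b + 1) * N := by ring
    have h5 : f b < f a := by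
      calc f b = φ b * N + idx b := rfl
        _ < φ b * N + N := h3
        _ = (φ b + 1) * N := h4
        _ ≤ φ a * N := h2
        _ ≤ φ a * N + idx a := Nat.le_add_right _ _
        _ = f a := rfl
    omega
  have atomexists : ∀ u v : L, u ⋖ v → ∃ a : L, IsAtom a ∧ a ≤ v ∧ ¬ a ≤ u := by
    intro u v huv
    obtain ⟨s, hs, hsup⟩ := hgeo.1 v
    by_contra hc
    push_neg at hc
    have hvu : v ≤ u := by
      rw [← hsup]
      apply Finset.sup_le
      intro a ha
      by_contra hau
      have hav : a ≤ v := by rw [← hsup]; exact Finset.le_sup (f := id) ha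
      exact hau (hc a (hs a ha) hav)
    exact (huv.lt.not_ge hvu)
  refine ⟨f, fun a _ b _ h => finj h, ?_⟩
  intro lab hlab
  have hφlabel : ∀ i : Fin r, φ (labelSeq lab g i) = i.val + 1 := by
    intro i
    obtain ⟨hatom, hle, hnle, _⟩ := hlab _ _ (hcov i)
    have h1 := hφ_le _ _ hle
    have h2 := hφ_gt _ _ hnle
    rw [Fin.val_succ] at h1
    rw [Fin.coe_castSucc] at h2
    simp only [labelSeq]
    omega
  have hmonog : Monotone fun i => f (labelSeq lab g i) := by
    intro i j hij
    rcases eq_or_lt_of_le hij with h | h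
    · rw [h]
    · have hφi := hφlabel i
      have hφj := hφlabel j
      have hij' : i.val < j.val := h
      have h1 : φ (labelSeq lab g i) + 1 ≤ φ (labelSeq lab g j) := by omega
      have h2 : (φ (labelSeq lab g i) + 1) * N ≤ φ (labelSeq lab g j) * N :=
        Nat.mul_le_mul_right N h1
      have h3 := idxlt (labelSeq lab g i)
      calc f (labelSeq lab g i) = φ (labelSeq lab g i) * N + idx (labelSeq lab g i) := rfl
        _ ≤ φ (labelSeq lab g i) * N + N := by omega
        _ = (φ (labelSeq lab g i) + 1) * N := by ring
        _ ≤ φ (labelSeq lab g j) * N := h2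
        _ ≤ f (labelSeq lab g j) := Nat.le_add_right _ _
  refine ⟨hmonog, ?_⟩
  intro g' hg' hmono'
  obtain ⟨h0', hlast', hcov'⟩ := hg'
  have key : ∀ k : Fin (r+1), g' k = g k := by
    intro k
    induction k using Fin.induction with
    | zero => rw [h0', h0]
    | succ k ih =>
      set x := g k.castSucc with hx
      have hxcov : x ⋖ g k.succ := hcov k
      obtain ⟨a0, ha0atom, ha0le, ha0nle⟩ := atomexists x (g k.succ) hxcov
      set S : Finset L := Finset.univ.filter (fun a => IsAtom a ∧ ¬ a ≤ x) with hS
      have hSne : S.Nonempty := ⟨a0, by simp [hS, ha0atom, ha0nle]⟩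
      obtain ⟨astar, hmem, hmin⟩ := S.exists_min_image f hSne
      have hastar : IsAtom astar ∧ ¬ astar ≤ x := by simpa [hS] using hmem
      have hfmin : ∀ b : L, IsAtom b → ¬ b ≤ x → f astar ≤ f b := fun b hb hbx =>
        hmin b (by simp [hS, hb, hbx])
      have hφa0 : φ a0 ≤ k.val + 1 := by
        have := hφ_le a0 k.succ ha0le
        rwa [Fin.val_succ] at this
      have hφgtk : k.val < φ astar := by
        have := hφ_gt astar k.castSucc hastar.2
        rwa [Fin.coe_castSucc] at this
      have hφeq : φ astar = k.val + 1 := by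
        have h1 := fφ astar a0 (hfmin a0 ha0atom ha0nle)
        omega
      have hasle : astar ≤ g k.succ := by
        obtain ⟨hlt, hle⟩ := hφ_spec astar
        have heq : (⟨φ astar, hlt⟩ : Fin (r+1)) = k.succ := by
          apply Fin.ext
          simp [hφeq, Fin.val_succ]
        rwa [heq] at hle
      have hjoin : x ⊔ astar = g k.succ := by
        have h1 : x < x ⊔ astar := left_lt_sup.mpr hastar.2
        have h2 : x ⊔ astar ≤ g k.succ := sup_le hxcov.le hasle
        exact h2.eq_of_not_lt (hxcov.2 h1)
      -- find first step where astar enters g'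
      have hQex : ∃ n : ℕ, k.val ≤ n ∧ ∃ h : n + 1 < r + 1, astar ≤ g' ⟨n+1, h⟩ := by
        have hkr : (k : ℕ) < r := k.isLt
        refine ⟨r - 1, by omega, by omega, ?_⟩
        have : (⟨r - 1 + 1, by omega⟩ : Fin (r+1)) = Fin.last r := by
          apply Fin.ext; simp; omega
        rw [this, hlast']
        exact le_top
      set i := Nat.find hQex with hi
      obtain ⟨hki, hi1, hasle'⟩ := Nat.find_spec hQex
      have hilt : i < r := by omega
      have hnle' : ¬ astar ≤ g' ⟨i, by omega⟩ := by
        rcases Nat.lt_or_ge k.val i with hlt | hge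
        · intro hcon
          have : i - 1 < i := by omega
          apply Nat.find_min hQex this
          refine ⟨by omega, by omega, ?_⟩
          have heq : (⟨i - 1 + 1, by omega⟩ : Fin (r+1)) = ⟨i, by omega⟩ := by
            apply Fin.ext; simp; omega
          rwa [heq]
        · have hik : i = k.val := by omega
          have heq : (⟨i, by omega⟩ : Fin (r+1)) = k.castSucc := by
            apply Fin.ext; simp [hik]
          rw [heq, ih]
          exact hastar.2
      set j : Fin r := ⟨i, hilt⟩ with hj
      have hjc : j.castSucc = (⟨i, by omega⟩ : Fin (r+1)) := by apply Fin.ext; simp [hj]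
      have hjs : j.succ = (⟨i + 1, hi1⟩ : Fin (r+1)) := by apply Fin.ext; simp [hj]
      obtain ⟨_, _, _, hminj⟩ := hlab _ _ (hcov' j)
      have hfj : f (labelSeq lab g' j) ≤ f astar := by
        apply hminj astar hastar.1
        · rw [hjs]; exact hasle'
        · rw [hjc]; exact hnle'
      obtain ⟨hkatom, hkle, hknle, _⟩ := hlab _ _ (hcov' k)
      have hfk : f astar ≤ f (labelSeq lab g' k) := by
        apply hfmin _ hkatom
        rw [← ih]
        exact hknle
      have hkj : k ≤ j := by
        rw [Fin.le_def]; exact hki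
      have hmono2 : f (labelSeq lab g' k) ≤ f (labelSeq lab g' j) := hmono' hkj
      have hfeq : f (labelSeq lab g' k) = f astar := le_antisymm (by omega) hfk
      have hlabeq : labelSeq lab g' k = astar := finj hfeq
      have hjoin' : g' k.castSucc ⊔ labelSeq lab g' k = g' k.succ := by
        have h1 : g' k.castSucc < g' k.castSucc ⊔ labelSeq lab g' k := left_lt_sup.mpr hknle
        have h2 : g' k.castSucc ⊔ labelSeq lab g' k ≤ g' k.succ := sup_le (hcov' k).le hkle
        exact h2.eq_of_not_lt ((hcov' k).2 h1)
      rw [← hjoin', hlabeq, ih, hjoin]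
  funext k
  exact key k
end

section
/- Let L be a finite geometric lattice of rank r with the minimal labeling λ induced by a linear order on its atoms, and let (μ_1, …, μ_r) be the label sequence of some maximal chain of L. Then the increasing rearrangement of (μ_1, …, μ_r) is itself the label sequence of a maximal chain of L if and only if it is lexicographically least among the increasing rearrangements of the label sequences of all maximal chains of L. -/
/-!
Call a maximal chain *greedy* if each of its labels is the least atom outside the bottom of its
cover. Greedy chains exist: `gₙ₊₁ = gₙ ⊔ aₙ`, with `aₙ` the least atom `≰ gₙ`, is one by
semimodularity. A greedy chain `G` has increasing labels, and its sorted label sequence is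
entrywise below that of any maximal chain `c`: the labels of `c` smaller than the `i`-th label
of `G` all lie below `G i`, and distinct labels of `c` generate a strict chain of the same
length, so there are at most `height (G i) = i` of them. Conversely, a chain with increasing
labels is greedy, because an atom `a ≰ cᵢ` enters the chain at some later cover, whose label is
then at most `a`.
-/

open Finset Order

def HasRank (L : Type*) [Preorder L] (r : ℕ) : Prop :=
  ∀ c : Set L, IsMaxChain (· ≤ ·) c → c.ncard = r + 1

theorem List.Forall₂.eq_or_lex_lt {α : Type*} [PartialOrder α] {l₁ l₂ : List α}
    (h : List.Forall₂ (· ≤ ·) l₁ l₂) : l₁ = l₂ ∨ List.Lex (· < ·) l₁ l₂ := by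
  induction h with
  | nil => exact .inl rfl
  | cons hab _ ih =>
    rcases hab.lt_or_eq with hab | rfl
    · exact .inr (.rel hab)
    · rcases ih with rfl | h
      · exact .inl rfl
      · exact .inr (.cons h)

theorem List.le_getElem_of_countP_lt_le {α : Type*} [LinearOrder α] {l : List α}
    (hl : l.Pairwise (· ≤ ·)) {c : α} {i : ℕ} (hi : i < l.length)
    (hc : l.countP (· < c) ≤ i) : c ≤ l[i] := by
  induction l generalizing i with
  | nil => simp at hi
  | cons a l ih =>
    rw [List.pairwise_cons] at hl
    rcases lt_or_ge a c with hac | hca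
    · rw [List.countP_cons_of_pos (by simpa using hac)] at hc
      obtain ⟨i, rfl⟩ : ∃ k, i = k + 1 := ⟨i - 1, by omega⟩
      exact ih hl.2 (by simpa using hi) (by omega)
    · cases i with
      | zero => exact hca
      | succ i => exact hca.trans (hl.1 _ (List.getElem_mem _))

theorem List.countP_ofFn {α : Type*} {n : ℕ} (g : Fin n → α) (p : α → Prop)
    [DecidablePred p] :
    (List.ofFn g).countP (fun a => p a) = #{i | p (g i)} := by
  rw [← Multiset.coe_countP, ← Fin.univ_val_map, Multiset.countP_map, Finset.card_def,
    Finset.filter_val]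

theorem Fin.exists_le_not_castSucc_and_succ {n : ℕ} {P : Fin (n + 1) → Prop} {k : Fin (n + 1)}
    (hk : ¬ P k) (hlast : P (Fin.last n)) :
    ∃ j : Fin n, k ≤ j.castSucc ∧ ¬ P j.castSucc ∧ P j.succ := by
  induction k using Fin.reverseInduction with
  | last => exact absurd hlast hk
  | cast j ih =>
    by_cases hj : P j.succ
    · exact ⟨j, le_rfl, hk, hj⟩
    · obtain ⟨j', hjj', hj'⟩ := ih hj
      exact ⟨j', Fin.castSucc_lt_succ.le.trans hjj', hj'⟩

section Rank

variable {L : Type*} [PartialOrder L] {r k : ℕ}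

theorem HasRank.length_le (hrank : HasRank L r) (p : LTSeries L) : p.length ≤ r := by
  obtain ⟨t, ht, hsub⟩ := p.strictMono.monotone.isChain_range.exists_maxChain
  have hfin : t.Finite := Set.finite_of_ncard_ne_zero (by rw [hrank t ht]; omega)
  have := Set.ncard_le_ncard hsub hfin
  rwa [Set.ncard_range_of_injective p.strictMono.injective, hrank t ht, Nat.card_fin,
    add_le_add_iff_right] at this

theorem HasRank.height_le (hrank : HasRank L r) (x : L) : height x ≤ r :=
  Order.height_le fun p _ => by exact_mod_cast hrank.length_le p

variable [BoundedOrder L] {c : Fin (k + 1) → L}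

theorem IsMaxChainFun.strictMono (hc : IsMaxChainFun k c) : StrictMono c :=
  Fin.strictMono_iff_lt_succ.2 fun i => (hc.2.2 i).lt

theorem IsMaxChainFun.length_eq (hrank : HasRank L r) (hc : IsMaxChainFun k c) : k = r := by
  have := hrank _ (IsMaxChain.range_fin_of_covBy hc.1 hc.2.1 fun i => (hc.2.2 i).wcovBy)
  rwa [Set.ncard_range_of_injective hc.strictMono.injective, Nat.card_fin, add_left_inj] at this

theorem IsMaxChainFun.height_apply (hrank : HasRank L k) (hc : IsMaxChainFun k c)
    (i : Fin (k + 1)) : height (c i) = i := by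
  let p : LTSeries L := ⟨k, c, fun i => (hc.2.2 i).lt⟩
  exact height_eq_index_of_length_eq_height_last (p := p)
    (le_antisymm length_le_height_last (hrank.height_le _)) i

end Rank

section Labels

variable {L : Type*} [Lattice L] [BoundedOrder L] {r : ℕ} {f : L → ℕ} {lab : L → L → L}
  {c G : Fin (r + 1) → L}

theorem card_le_height_sup_labelSeq (hlab : IsMinimalLabeling f lab) (hc : IsMaxChainFun r c)
    (J : Finset (Fin r)) : (#J : ℕ∞) ≤ height (J.sup (labelSeq lab c)) := by
  induction J using Finset.induction_on_max with
  | empty => simp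
  | insert j J hJ ih =>
    have hle : J.sup (labelSeq lab c) ≤ c j.castSucc := Finset.sup_le fun i hi =>
      (hlab _ _ (hc.2.2 i)).2.1.trans
        (hc.strictMono.monotone (Fin.succ_le_castSucc_iff.2 (hJ i hi)))
    have hlt : J.sup (labelSeq lab c) < (insert j J).sup (labelSeq lab c) := by
      rw [Finset.sup_insert]
      exact lt_of_le_of_ne le_sup_right fun h =>
        (hlab _ _ (hc.2.2 j)).2.2.1 ((h ▸ le_sup_left).trans hle)
    rw [card_insert_of_notMem fun hj => (hJ j hj).false]
    push_cast
    exact (add_le_add_left ih 1).trans (height_add_one_le hlt)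

def IsGreedy (f : L → ℕ) (lab : L → L → L) (c : Fin (r + 1) → L) : Prop :=
  ∀ i : Fin r, ∀ a : L, IsAtom a → ¬ a ≤ c i.castSucc → f (labelSeq lab c i) ≤ f a

theorem IsGreedy.monotone (hlab : IsMinimalLabeling f lab) (hc : IsMaxChainFun r c)
    (hg : IsGreedy f lab c) : Monotone fun i => f (labelSeq lab c i) := by
  intro i j hij
  obtain ⟨hatom, -, hnle, -⟩ := hlab _ _ (hc.2.2 j)
  exact hg i _ hatom fun h =>
    hnle (h.trans (hc.strictMono.monotone (Fin.castSucc_le_castSucc_iff.2 hij)))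

theorem isGreedy_of_monotone (hlab : IsMinimalLabeling f lab) (hc : IsMaxChainFun r c)
    (hmono : Monotone fun i => f (labelSeq lab c i)) : IsGreedy f lab c := by
  intro i a ha hai
  obtain ⟨j, hij, hnle, hle⟩ :=
    Fin.exists_le_not_castSucc_and_succ (P := fun k => a ≤ c k) hai (hc.2.1 ▸ le_top)
  exact (hmono (Fin.castSucc_le_castSucc_iff.1 hij)).trans
    ((hlab _ _ (hc.2.2 j)).2.2.2 a ha hle hnle)

theorem IsGreedy.card_filter_lt_le (hrank : HasRank L r) (hlab : IsMinimalLabeling f lab)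
    (hG : IsMaxChainFun r G) (hg : IsGreedy f lab G) (hc : IsMaxChainFun r c) (i : Fin r) :
    #{j | f (labelSeq lab c j) < f (labelSeq lab G i)} ≤ i := by
  have hsup : ({j | f (labelSeq lab c j) < f (labelSeq lab G i)} : Finset (Fin r)).sup
      (labelSeq lab c) ≤ G i.castSucc := Finset.sup_le fun j hj => by
    by_contra h
    exact (Finset.mem_filter.1 hj).2.not_ge (hg i _ (hlab _ _ (hc.2.2 j)).1 h)
  have := (card_le_height_sup_labelSeq hlab hc _).trans
    ((height_mono hsup).trans_eq (hG.height_apply hrank _))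
  exact_mod_cast this

theorem IsGreedy.forall₂_le (hrank : HasRank L r) (hlab : IsMinimalLabeling f lab)
    (hG : IsMaxChainFun r G) (hg : IsGreedy f lab G) (hc : IsMaxChainFun r c) {l : List ℕ}
    (hl : l.Pairwise (· ≤ ·)) (hperm : l.Perm (List.ofFn fun i => f (labelSeq lab c i))) :
    List.Forall₂ (· ≤ ·) (List.ofFn fun i => f (labelSeq lab G i)) l := by
  rw [List.forall₂_iff_get]
  refine ⟨by simp [hperm.length_eq], fun i h₁ h₂ => ?_⟩
  simp only [List.get_eq_getElem, List.getElem_ofFn]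
  refine List.le_getElem_of_countP_lt_le hl h₂ ?_
  rw [hperm.countP_eq, List.countP_ofFn]
  simpa using hg.card_filter_lt_le hrank hlab hG hc ⟨i, by simpa using h₁⟩

end Labels

section Greedy

variable {L : Type*} [Lattice L] [BoundedOrder L] {r : ℕ} {f : L → ℕ} {lab : L → L → L}

theorem covBy_sup_of_isAtom [Finite L] (hgeo : IsGeometricLattice L) {a : L} (ha : IsAtom a)
    {x : L} (hax : ¬ a ≤ x) : x ⋖ x ⊔ a := by
  induction x using WellFoundedLT.induction with
  | _ x ih =>
    rcases eq_bot_or_bot_lt x with rfl | hx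
    · simpa using ha.bot_covBy
    obtain ⟨y, -, hyx⟩ := exists_le_covBy_of_lt hx
    have hay : ¬ a ≤ y := fun h => hax (h.trans hyx.le)
    have hne : x ≠ y ⊔ a := fun h => hax (h ▸ le_sup_right)
    have := (hgeo.2 y x (y ⊔ a) hne hyx (ih y hyx.lt hay)).1
    rwa [← sup_assoc, sup_eq_left.2 hyx.le] at this

open Classical in
noncomputable def nextAtom (f : L → ℕ) (x : L) : L :=
  if h : {a : L | IsAtom a ∧ ¬ a ≤ x}.Nonempty then Function.argminOn f _ h else ⊤

theorem nextAtom_spec (hgeo : IsGeometricLattice L) {x : L} (hx : x ≠ ⊤) :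
    IsAtom (nextAtom f x) ∧ ¬ nextAtom f x ≤ x ∧
      ∀ a, IsAtom a → ¬ a ≤ x → f (nextAtom f x) ≤ f a := by
  have hne : {a : L | IsAtom a ∧ ¬ a ≤ x}.Nonempty := by
    by_contra! h
    obtain ⟨s, hs, hsup⟩ := hgeo.1 ⊤
    refine hx (top_le_iff.1 (hsup ▸ Finset.sup_le fun a ha => ?_))
    by_contra hax
    exact h.subset ⟨hs a ha, hax⟩
  rw [nextAtom, dif_pos hne]
  exact ⟨(Function.argminOn_mem f _ hne).1, (Function.argminOn_mem f _ hne).2,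
    fun a ha hax => Function.argminOn_le f {a : L | IsAtom a ∧ ¬ a ≤ x} ⟨ha, hax⟩⟩

noncomputable def greedy (f : L → ℕ) : ℕ → L
  | 0 => ⊥
  | n + 1 => greedy f n ⊔ nextAtom f (greedy f n)

theorem greedy_covBy [Finite L] (hgeo : IsGeometricLattice L) {n : ℕ} (hn : greedy f n ≠ ⊤) :
    greedy f n ⋖ greedy f (n + 1) :=
  covBy_sup_of_isAtom hgeo (nextAtom_spec hgeo hn).1 (nextAtom_spec hgeo hn).2.1

theorem greedy_eq_top_or_le_height [Finite L] (hgeo : IsGeometricLattice L) (n : ℕ) :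
    greedy f n = ⊤ ∨ (n : ℕ∞) ≤ height (greedy f n) := by
  induction n with
  | zero => simp
  | succ n ih =>
    by_cases hn : greedy f n = ⊤
    · left
      simp [greedy, hn]
    · right
      push_cast
      exact (add_le_add_left (ih.resolve_left hn) 1).trans
        (height_add_one_le (greedy_covBy hgeo hn).lt)

theorem isMaxChainFun_greedy [Finite L] (hgeo : IsGeometricLattice L) (hrank : HasRank L r) :
    IsMaxChainFun r fun i : Fin (r + 1) => greedy f i := by
  classical
  have hex : ∃ m, greedy f m = ⊤ := ⟨r + 1, (greedy_eq_top_or_le_height hgeo _).resolve_right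
    fun h => by have := h.trans (hrank.height_le _); norm_cast at this; omega⟩
  have hchain : IsMaxChainFun (Nat.find hex) fun i => greedy f i :=
    ⟨rfl, Nat.find_spec hex, fun i => greedy_covBy hgeo (Nat.find_min hex i.isLt)⟩
  obtain rfl := hchain.length_eq hrank
  exact hchain

theorem isGreedy_greedy [Finite L] (hgeo : IsGeometricLattice L) (hrank : HasRank L r)
    (hlab : IsMinimalLabeling f lab) : IsGreedy f lab fun i : Fin (r + 1) => greedy f i := by
  intro i a ha hai
  have hcov := (isMaxChainFun_greedy (f := f) hgeo hrank).2.2 i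
  obtain ⟨hatom, hnle, hmin⟩ := nextAtom_spec (f := f) hgeo hcov.lt.ne_top
  exact ((hlab _ _ hcov).2.2.2 _ hatom le_sup_right hnle).trans (hmin a ha hai)

end Greedy

theorem stmt8_general (L : Type*) [Lattice L] [Fintype L] [BoundedOrder L] (r : ℕ)
    (hgeo : IsGeometricLattice L)
    (hrank : ∀ c : Set L, IsMaxChain (· ≤ ·) c → c.ncard = r + 1)
    (f : L → ℕ)
    (lab : L → L → L) (hlab : IsMinimalLabeling f lab)
    (M : Fin (r+1) → L) (hM : IsMaxChainFun r M)
    (l : List ℕ) (hsort : l.Pairwise (· ≤ ·))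
    (hperm : l.Perm (List.ofFn fun i => f (labelSeq lab M i))) :
    (∃ M' : Fin (r+1) → L, IsMaxChainFun r M' ∧
        (List.ofFn fun i => f (labelSeq lab M' i)) = l) ↔
    (∀ M' : Fin (r+1) → L, IsMaxChainFun r M' →
      ∀ l' : List ℕ, l'.Pairwise (· ≤ ·) →
        l'.Perm (List.ofFn fun i => f (labelSeq lab M' i)) →
        l = l' ∨ List.Lex (· < ·) l l') := by
  set G : Fin (r + 1) → L := fun i => greedy f i
  have hG : IsMaxChainFun r G := isMaxChainFun_greedy hgeo hrank
  have hGg : IsGreedy f lab G := isGreedy_greedy hgeo hrank hlab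
  constructor
  · rintro ⟨M', hM', rfl⟩ M'' hM'' l'' hsort'' hperm''
    have hg' := isGreedy_of_monotone hlab hM' (List.sortedLE_ofFn_iff.1 hsort.sortedLE)
    exact (hg'.forall₂_le hrank hlab hM' hM'' hsort'' hperm'').eq_or_lex_lt
  · intro hmin
    have hGsort := (List.sortedLE_ofFn_iff.2 (hGg.monotone hlab hG)).pairwise
    have hGl := (hGg.forall₂_le hrank hlab hG hM hsort hperm).eq_or_lex_lt
    refine ⟨G, hG, ?_⟩
    rcases hmin G hG _ hGsort (List.Perm.refl _) with h | h
    · exact h.symm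
    · exact hGl.resolve_right (asymm h)

/-- Let `(μ_1, …, μ_r)` be the label sequence of a maximal chain `M` of a finite geometric
lattice of rank `r` with a minimal labeling, and let `l` be its increasing rearrangement
(read through `f`). Then `l` is the label sequence of a maximal chain of `L` iff `l` is
lexicographically least among the increasing rearrangements of the label sequences of all
maximal chains of `L`. -/
theorem stmt8 (L : Type*) [Lattice L] [Fintype L] [BoundedOrder L] (r : ℕ)
    (hgeo : IsGeometricLattice L)
    (hrank : ∀ c : Set L, IsMaxChain (· ≤ ·) c → c.ncard = r + 1)
    (f : L → ℕ) (hf : Set.InjOn f {a : L | IsAtom a})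
    (lab : L → L → L) (hlab : IsMinimalLabeling f lab)
    (M : Fin (r+1) → L) (hM : IsMaxChainFun r M)
    (l : List ℕ) (hsort : l.Pairwise (· ≤ ·))
    (hperm : l.Perm (List.ofFn fun i => f (labelSeq lab M i))) :
    (∃ M' : Fin (r+1) → L, IsMaxChainFun r M' ∧
        (List.ofFn fun i => f (labelSeq lab M' i)) = l) ↔
    (∀ M' : Fin (r+1) → L, IsMaxChainFun r M' →
      ∀ l' : List ℕ, l'.Pairwise (· ≤ ·) →
        l'.Perm (List.ofFn fun i => f (labelSeq lab M' i)) →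
        l = l' ∨ List.Lex (· < ·) l l') :=
  stmt8_general L r hgeo hrank f lab hlab M hM l hsort hperm
end

section
/- Let L be a finite geometric lattice of rank r with the minimal labeling λ induced by a linear order on its atoms, and let (λ_1, …, λ_r) be the label sequence of the unique ascending chain of L. Then for every permutation σ ∈ S_r, the rearranged sequence (λ_{σ(1)}, …, λ_{σ(r)}) is the label sequence of some maximal chain of L; indeed it is the label sequence of the maximal chain ⊥ ⋖ λ_{σ(1)} ⋖ λ_{σ(1)} ∨ λ_{σ(2)} ⋖ ⋯ ⋖ λ_{σ(1)} ∨ ⋯ ∨ λ_{σ(r)} = ⊤. -/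
/-!
In a semimodular lattice an atom `a ≰ x` gives a cover `x ⋖ x ⊔ a`, and atoms exchange:
`a ≤ x ⊔ b`, `a ≰ x` force `x ⊔ a = x ⊔ b`. The labels of any maximal chain are therefore
independent: a dependence `λ_j ≤ ⋁_{t ∈ S} λ_t` can be pushed by exchange to the largest index
involved, contradicting that each `λ_t` lies below the `t`-th element of the chain but not the
previous one. So the partial joins of `λ_{σ(1)}, λ_{σ(2)}, …` form a maximal chain. The label `b`
of its `i`-th step satisfies `f b ≤ f λ_{σ(i)}`, and `b` cannot lie below `C_{σ(i)-1}`, since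
exchange would then put `λ_{σ(i)}` under the join of the other labels; as the chain `C` is
ascending, every atom outside `C_{σ(i)-1}` has `f`-value at least `f λ_{σ(i)}`, so `b = λ_{σ(i)}`.
-/

theorem isWeakUpperModularLattice_of_covBy {L : Type*} [Lattice L]
    (hsm : ∀ x y y' : L, y ≠ y' → x ⋖ y → x ⋖ y' → y ⋖ (y ⊔ y') ∧ y' ⋖ (y ⊔ y')) :
    IsWeakUpperModularLattice L where
  covBy_sup_of_inf_covBy_covBy {a b} ha hb := by
    refine (hsm _ a b ?_ ha hb).1
    rintro rfl
    simp at ha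

section WeakUpperModular

variable {L : Type*} [Lattice L] [OrderBot L] [Finite L] [IsWeakUpperModularLattice L]

theorem IsAtom.covBy_sup_of_not_le {a : L} (ha : IsAtom a) {x : L} (hax : ¬ a ≤ x) :
    x ⋖ x ⊔ a := by
  induction x using WellFoundedLT.induction with
  | _ x ih =>
    rcases eq_or_ne x ⊥ with rfl | hx
    · simpa using ha.bot_covBy
    have : IsStronglyCoatomic L := IsStronglyCoatomic.of_wellFounded_gt wellFounded_gt
    obtain ⟨y, -, hyx⟩ := (bot_lt_iff_ne_bot.2 hx).exists_le_covby
    have hy : y ⋖ y ⊔ a := ih y hyx.lt fun h => hax (h.trans hyx.le)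
    -- `x` and `y ⊔ a` are distinct upper covers of `y`, so they meet in `y`
    have hmeet : x ⊓ (y ⊔ a) = y := by
      refine (hyx.eq_or_eq (le_inf hyx.le le_sup_left) inf_le_left).resolve_right fun h => ?_
      have hxya : x = y ⊔ a := (hy.eq_or_eq hyx.le (inf_eq_left.1 h)).resolve_left hyx.ne'
      exact hax (hxya ▸ le_sup_right)
    have := covBy_sup_of_inf_covBy_of_inf_covBy_left (a := x) (b := y ⊔ a)
      (by rwa [hmeet]) (by rwa [hmeet])
    rwa [← sup_assoc, sup_eq_left.2 hyx.le] at this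

theorem IsAtom.sup_eq_sup_of_le_sup {a b x : L} (ha : IsAtom a) (hb : IsAtom b)
    (hab : a ≤ x ⊔ b) (hax : ¬ a ≤ x) : x ⊔ a = x ⊔ b := by
  have hbx : ¬ b ≤ x := fun h => hax (sup_eq_left.2 h ▸ hab)
  exact ((hb.covBy_sup_of_not_le hbx).eq_or_eq le_sup_left (sup_le le_sup_left hab)).resolve_left
    (ha.covBy_sup_of_not_le hax).ne'

end WeakUpperModular

open Finset

section PartialSup

variable {L : Type*} [SemilatticeSup L] [OrderBot L] {r : ℕ}

def partialSup (l : Fin r → L) (k : Fin (r+1)) : L :=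
  (univ.filter fun i : Fin r => i.castSucc < k).sup l

theorem partialSup_zero (l : Fin r → L) : partialSup l 0 = ⊥ := by
  simp [partialSup]

theorem partialSup_succ (l : Fin r → L) (i : Fin r) :
    partialSup l i.succ = partialSup l i.castSucc ⊔ l i := by
  have : (univ.filter fun t : Fin r => t.castSucc < i.succ) =
      insert i (univ.filter fun t : Fin r => t.castSucc < i.castSucc) := by
    ext t
    simp [Fin.castSucc_lt_succ_iff, le_iff_eq_or_lt]
  rw [partialSup, this, sup_insert, sup_comm]
  rfl

theorem partialSup_last (l : Fin r → L) : partialSup l (Fin.last r) = univ.sup l := by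
  simp [partialSup, Fin.castSucc_lt_last]

end PartialSup

section MaximalChain

variable {L : Type*} [Lattice L] [BoundedOrder L] {f : L → ℕ} {lab : L → L → L} {r : ℕ}
  {C : Fin (r+1) → L}

theorem IsMaxChainFun.monotone (hC : IsMaxChainFun r C) : Monotone C :=
  (Fin.strictMono_iff_lt_succ.2 fun i => (hC.2.2 i).lt).monotone

namespace IsMinimalLabeling

theorem isAtom_labelSeq (hlab : IsMinimalLabeling f lab) (hC : IsMaxChainFun r C)
    (i : Fin r) : IsAtom (labelSeq lab C i) :=
  (hlab _ _ (hC.2.2 i)).1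

theorem labelSeq_le (hlab : IsMinimalLabeling f lab) (hC : IsMaxChainFun r C)
    (i : Fin r) : labelSeq lab C i ≤ C i.succ :=
  (hlab _ _ (hC.2.2 i)).2.1

theorem labelSeq_not_le (hlab : IsMinimalLabeling f lab) (hC : IsMaxChainFun r C)
    (i : Fin r) : ¬ labelSeq lab C i ≤ C i.castSucc :=
  (hlab _ _ (hC.2.2 i)).2.2.1

theorem labelSeq_le_of_lt (hlab : IsMinimalLabeling f lab) (hC : IsMaxChainFun r C)
    {t m : Fin r} (h : t < m) : labelSeq lab C t ≤ C m.castSucc :=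
  (hlab.labelSeq_le hC t).trans (hC.monotone (Fin.succ_le_castSucc_iff.2 h))

theorem eq_partialSup_labelSeq (hlab : IsMinimalLabeling f lab) (hC : IsMaxChainFun r C)
    (k : Fin (r+1)) : C k = partialSup (labelSeq lab C) k := by
  induction k using Fin.induction with
  | zero => rw [partialSup_zero, hC.1]
  | succ i ih =>
    rw [partialSup_succ, ← ih]
    have hcov := hC.2.2 i
    exact ((hcov.eq_or_eq le_sup_left (sup_le hcov.le (hlab.labelSeq_le hC i))).resolve_left
      fun h => hlab.labelSeq_not_le hC i (sup_eq_left.1 h)).symm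

theorem f_labelSeq_le_of_not_le (hlab : IsMinimalLabeling f lab) (hC : IsMaxChainFun r C)
    (hCasc : Monotone fun i => f (labelSeq lab C i)) {a : L}
    (ha : IsAtom a) (k : Fin r) (hak : ¬ a ≤ C k.castSucc) : f (labelSeq lab C k) ≤ f a := by
  induction k using WellFoundedGT.induction with
  | _ k ih =>
    by_cases hak' : a ≤ C k.succ
    · exact (hlab _ _ (hC.2.2 k)).2.2.2 a ha hak' hak
    obtain ⟨m, hm⟩ : ∃ m : Fin r, m.castSucc = k.succ :=
      Fin.exists_castSucc_eq.2 fun h => hak' (by rw [h, hC.2.1]; exact le_top)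
    have hkm : k < m := by rw [← Fin.castSucc_lt_castSucc_iff, hm]; exact Fin.castSucc_lt_succ
    exact (hCasc hkm.le).trans (ih m hkm (hm ▸ hak'))

variable [Finite L] [IsWeakUpperModularLattice L]

theorem not_labelSeq_le_sup (hlab : IsMinimalLabeling f lab) (hC : IsMaxChainFun r C)
    {S : Finset (Fin r)} {j : Fin r} (hj : j ∉ S) :
    ¬ labelSeq lab C j ≤ S.sup (labelSeq lab C) := by
  classical
  induction S using Finset.induction_on_max generalizing j with
  | empty => simpa using (hlab.isAtom_labelSeq hC j).ne_bot
  | insert m S hSm ih =>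
    intro hle
    have hSle : S.sup (labelSeq lab C) ≤ C m.castSucc :=
      Finset.sup_le fun t ht => hlab.labelSeq_le_of_lt hC (hSm t ht)
    rw [sup_insert, sup_comm] at hle
    rcases (ne_of_mem_of_not_mem (mem_insert_self m S) hj).lt_or_gt with hmj | hjm
    · exact hlab.labelSeq_not_le hC j <| hle.trans <|
        sup_le (hSle.trans (hC.monotone (Fin.castSucc_le_castSucc_iff.2 hmj.le)))
          (hlab.labelSeq_le_of_lt hC hmj)
    · have hex := (hlab.isAtom_labelSeq hC j).sup_eq_sup_of_le_sup
        (hlab.isAtom_labelSeq hC m) hle (ih fun h => hj (mem_insert_of_mem h))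
      exact hlab.labelSeq_not_le hC m <|
        (le_sup_right.trans hex.ge).trans (sup_le hSle (hlab.labelSeq_le_of_lt hC hjm))

theorem not_labelSeq_le_sup_partialSup_perm (hlab : IsMinimalLabeling f lab)
    (hC : IsMaxChainFun r C) (σ : Equiv.Perm (Fin r)) (i : Fin r) :
    ¬ labelSeq lab C (σ i) ≤ C (σ i).castSucc ⊔ partialSup (labelSeq lab C ∘ σ) i.castSucc := by
  classical
  rw [hlab.eq_partialSup_labelSeq hC (σ i).castSucc, partialSup, partialSup, ← sup_image,
    ← sup_union]
  exact hlab.not_labelSeq_le_sup hC (by simp)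

theorem covBy_partialSup_perm (hlab : IsMinimalLabeling f lab) (hC : IsMaxChainFun r C)
    (σ : Equiv.Perm (Fin r)) (i : Fin r) :
    partialSup (labelSeq lab C ∘ σ) i.castSucc ⋖ partialSup (labelSeq lab C ∘ σ) i.succ := by
  rw [partialSup_succ]
  exact (hlab.isAtom_labelSeq hC (σ i)).covBy_sup_of_not_le fun h =>
    hlab.not_labelSeq_le_sup_partialSup_perm hC σ i (h.trans le_sup_right)

theorem labelSeq_partialSup_perm (hlab : IsMinimalLabeling f lab) (hC : IsMaxChainFun r C)
    (hf : Set.InjOn f {a : L | IsAtom a}) (hCasc : Monotone fun i => f (labelSeq lab C i))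
    (σ : Equiv.Perm (Fin r)) (i : Fin r) :
    labelSeq lab (partialSup (labelSeq lab C ∘ σ)) i = labelSeq lab C (σ i) := by
  set M := partialSup (labelSeq lab C ∘ σ)
  have hM : M i.succ = M i.castSucc ⊔ labelSeq lab C (σ i) := partialSup_succ _ i
  have hσi := hlab.isAtom_labelSeq hC (σ i)
  have hnot := hlab.not_labelSeq_le_sup_partialSup_perm hC σ i
  obtain ⟨hb, hbM, hbM', hbmin⟩ := hlab _ _ (hlab.covBy_partialSup_perm hC σ i)
  change lab (M i.castSucc) (M i.succ) = _
  set b := lab (M i.castSucc) (M i.succ)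
  have hfb : f b ≤ f (labelSeq lab C (σ i)) :=
    hbmin _ hσi (le_sup_right.trans hM.ge) fun h => hnot (h.trans le_sup_right)
  have hbC : ¬ b ≤ C (σ i).castSucc := by
    intro hbC
    have hex := hb.sup_eq_sup_of_le_sup hσi (hbM.trans hM.le) hbM'
    apply hnot
    calc labelSeq lab C (σ i) ≤ M i.castSucc ⊔ b := le_sup_right.trans hex.ge
      _ ≤ C (σ i).castSucc ⊔ M i.castSucc := sup_le le_sup_right (hbC.trans le_sup_left)
  exact hf hb hσi (hfb.antisymm (hlab.f_labelSeq_le_of_not_le hC hCasc hb _ hbC))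

end IsMinimalLabeling

end MaximalChain

theorem stmt9_general (L : Type*) [Lattice L] [Fintype L] [BoundedOrder L] (r : ℕ)
    (hgeo : IsGeometricLattice L)
    (f : L → ℕ) (hf : Set.InjOn f {a : L | IsAtom a})
    (lab : L → L → L) (hlab : IsMinimalLabeling f lab)
    (C : Fin (r+1) → L) (hC : IsMaxChainFun r C)
    (hCasc : Monotone fun i => f (labelSeq lab C i))
    (σ : Equiv.Perm (Fin r)) :
    ∃ M : Fin (r+1) → L, IsMaxChainFun r M ∧
      (∀ k : Fin (r+1),
        M k = (Finset.univ.filter fun i : Fin r => i.castSucc < k).sup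
          fun i => labelSeq lab C (σ i)) ∧
      ∀ i : Fin r, labelSeq lab M i = labelSeq lab C (σ i) := by
  have := isWeakUpperModularLattice_of_covBy hgeo.2
  have htop : partialSup (labelSeq lab C ∘ σ) (Fin.last r) = ⊤ := by
    rw [partialSup_last, ← sup_image, image_univ_of_surjective σ.surjective, ← partialSup_last,
      ← hlab.eq_partialSup_labelSeq hC, hC.2.1]
  exact ⟨partialSup (labelSeq lab C ∘ σ),
    ⟨partialSup_zero _, htop, hlab.covBy_partialSup_perm hC σ⟩, fun _ => rfl,
    hlab.labelSeq_partialSup_perm hC hf hCasc σ⟩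

/-- Let `(λ_1, …, λ_r)` be the label sequence of the unique ascending chain `C` of a
finite geometric lattice of rank `r` with a minimal labeling. For every permutation `σ`,
the rearranged sequence `(λ_{σ(1)}, …, λ_{σ(r)})` is the label sequence of the maximal
chain of partial joins `⊥ ⋖ λ_{σ(1)} ⋖ λ_{σ(1)} ∨ λ_{σ(2)} ⋖ ⋯ ⋖ ⊤`. -/
theorem stmt9 (L : Type*) [Lattice L] [Fintype L] [BoundedOrder L] (r : ℕ)
    (hgeo : IsGeometricLattice L)
    (hrank : ∀ c : Set L, IsMaxChain (· ≤ ·) c → c.ncard = r + 1)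
    (f : L → ℕ) (hf : Set.InjOn f {a : L | IsAtom a})
    (lab : L → L → L) (hlab : IsMinimalLabeling f lab)
    (C : Fin (r+1) → L) (hC : IsMaxChainFun r C)
    (hCasc : Monotone fun i => f (labelSeq lab C i))
    (σ : Equiv.Perm (Fin r)) :
    ∃ M : Fin (r+1) → L, IsMaxChainFun r M ∧
      (∀ k : Fin (r+1),
        M k = (Finset.univ.filter fun i : Fin r => i.castSucc < k).sup
          fun i => labelSeq lab C (σ i)) ∧
      ∀ i : Fin r, labelSeq lab M i = labelSeq lab C (σ i) :=
  stmt9_general L r hgeo f hf lab hlab C hC hCasc σ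
end

section
/- Let L be a finite geometric lattice of rank r with the minimal labeling λ induced by a linear order on its atoms, and let M be a maximal chain whose label sequence is a rearrangement of the label sequence of the unique ascending chain of L. Suppose u_{i-1} ⋖ u_i ⋖ u_{i+1} are consecutive elements of M with a descent λ(u_{i-1},u_i) > λ(u_i,u_{i+1}). Then the pair (λ(u_i,u_{i+1}), λ(u_{i-1},u_i)) is the lexicographically smallest label sequence of any saturated chain from u_{i-1} to u_{i+1}; in particular there exists v with u_{i-1} ⋖ v ⋖ u_{i+1}, λ(u_{i-1},v) = λ(u_i,u_{i+1}) and λ(v,u_{i+1}) = λ(u_{i-1},u_i). -/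
open Finset

theorem CovBy.sup_eq_of_le_of_not_le {α : Type*} [Lattice α] {u v w : α} (h : u ⋖ v)
    (hwv : w ≤ v) (hwu : ¬ w ≤ u) : u ⊔ w = v :=
  (h.wcovBy.eq_or_eq le_sup_left (sup_le h.le hwv)).resolve_left
    fun e => hwu (le_sup_right.trans e.le)

theorem Fin.exists_le_not_castSucc_and_succ_s10 {r : ℕ} {P : Fin (r + 1) → Prop} (t : Fin r)
    (ht : ¬ P t.castSucc) (hlast : P (Fin.last r)) :
    ∃ k : Fin r, t ≤ k ∧ ¬ P k.castSucc ∧ P k.succ := by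
  classical
  have hmem : ∀ {j}, ¬ P j → j ∈ univ.filter fun j => ¬ P j := by simp
  set m := (univ.filter fun j => ¬ P j).max' ⟨_, hmem ht⟩
  have hm : ¬ P m := by simpa using (univ.filter fun j => ¬ P j).max'_mem ⟨_, hmem ht⟩
  obtain ⟨k, hk⟩ := Fin.exists_castSucc_eq.2 fun h : m = Fin.last r => hm (h ▸ hlast)
  refine ⟨k, ?_, hk ▸ hm, ?_⟩
  · exact Fin.castSucc_le_castSucc_iff.1 (hk ▸ le_max' _ _ (hmem ht))
  · by_contra hP
    exact (Fin.castSucc_lt_succ (i := k)).not_ge (hk ▸ le_max' _ _ (hmem hP))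

namespace IsGeometricLattice

variable {L : Type*} [Lattice L] [BoundedOrder L]

theorem sup_wcovBy_sup_atom (hgeo : IsGeometricLattice L) (s : Finset L)
    (hs : ∀ e ∈ s, IsAtom e) {d : L} (hd : IsAtom d) : s.sup id ⩿ s.sup id ⊔ d := by
  classical
  induction s using Finset.induction_on generalizing d with
  | empty => simpa using hd.bot_covBy.wcovBy
  | @insert e s _ ih =>
    have ih' : ∀ {d}, IsAtom d → s.sup id ⩿ s.sup id ⊔ d :=
      ih fun x hx => hs x (mem_insert_of_mem hx)
    set X := s.sup id
    rw [sup_insert, id, sup_comm e]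
    by_cases heX : e ≤ X
    · rw [sup_eq_left.2 heX]
      exact ih' hd
    by_cases hdXe : d ≤ X ⊔ e
    · rw [sup_eq_left.2 hdXe]
      exact WCovBy.refl _
    have hdX : ¬ d ≤ X := fun h => hdXe (h.trans le_sup_left)
    have hXe : X ⋖ X ⊔ e :=
      (ih' (hs e (mem_insert_self _ _))).covBy_of_ne fun h => heX (le_sup_right.trans h.ge)
    have hXd : X ⋖ X ⊔ d := (ih' hd).covBy_of_ne fun h => hdX (le_sup_right.trans h.ge)
    have hne : X ⊔ e ≠ X ⊔ d := fun h => hdXe (le_sup_right.trans h.ge)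
    have hcov := (hgeo.2 X _ _ hne hXe hXd).1
    rw [sup_sup_sup_comm, sup_idem, ← sup_assoc] at hcov
    exact hcov.wcovBy

theorem wcovBy_sup_atom (hgeo : IsGeometricLattice L) (x : L) {d : L} (hd : IsAtom d) :
    x ⩿ x ⊔ d := by
  obtain ⟨s, hs, rfl⟩ := hgeo.1 x
  exact hgeo.sup_wcovBy_sup_atom s hs hd

theorem covBy_sup_atom (hgeo : IsGeometricLattice L) {x d : L} (hd : IsAtom d)
    (hdx : ¬ d ≤ x) : x ⋖ x ⊔ d :=
  (hgeo.wcovBy_sup_atom x hd).covBy_of_ne fun h => hdx (le_sup_right.trans h.ge)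

theorem exists_saturated_chain_sup_atoms (hgeo : IsGeometricLattice L) {ι : Type*}
    (s : Finset ι) (a : ι → L) (ha : ∀ j ∈ s, IsAtom (a j)) :
    ∃ c : Finset L, IsChain (· ≤ ·) (c : Set L) ∧ (∀ w ∈ c, w ≤ s.sup a) ∧
      (∀ z, z ≤ s.sup a → (∀ w ∈ c, z ≤ w ∨ w ≤ z) → z ∈ c) ∧
      c.card ≤ s.card + 1 := by
  classical
  induction s using Finset.induction_on with
  | empty =>
    refine ⟨{⊥}, by simp, by simp, fun z hz _ => by simpa using hz, by simp⟩
  | @insert j s hj ih =>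
    obtain ⟨c, hch, hbd, hsat, hcard⟩ := ih fun x hx => ha x (mem_insert_of_mem hx)
    set t := s.sup a
    have hwcov : t ⩿ a j ⊔ t :=
      sup_comm t (a j) ▸ hgeo.wcovBy_sup_atom t (ha j (mem_insert_self _ _))
    have htc : t ∈ c := hsat t le_rfl fun w hw => Or.inr (hbd w hw)
    rw [sup_insert]
    refine ⟨insert (a j ⊔ t) c, ?_, ?_, fun z hz hcomp => ?_, ?_⟩
    · rw [coe_insert]
      exact hch.insert fun w hw _ => Or.inr ((hbd w hw).trans hwcov.le)
    · exact (forall_mem_insert _ _ _).2 ⟨le_rfl, fun w hw => (hbd w hw).trans hwcov.le⟩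
    · rcases hcomp t (mem_insert_of_mem htc) with hzt | htz
      · exact mem_insert_of_mem (hsat z hzt fun w hw => hcomp w (mem_insert_of_mem hw))
      · rcases hwcov.eq_or_eq htz hz with rfl | rfl
        · exact mem_insert_of_mem htc
        · exact mem_insert_self _ _
    · rw [card_insert_of_notMem hj]
      exact (card_insert_le _ _).trans (by omega)

theorem le_card_of_sup_eq_top (hgeo : IsGeometricLattice L) {r : ℕ}
    (hrank : ∀ c : Set L, IsMaxChain (· ≤ ·) c → c.ncard = r + 1) {ι : Type*}
    (s : Finset ι) (a : ι → L) (ha : ∀ j ∈ s, IsAtom (a j)) (htop : s.sup a = ⊤) :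
    r ≤ s.card := by
  obtain ⟨c, hch, -, hsat, hcard⟩ := hgeo.exists_saturated_chain_sup_atoms s a ha
  have hmax : IsMaxChain (· ≤ ·) (c : Set L) := by
    refine ⟨hch, fun c' hc' hsub => subset_antisymm hsub fun z hz => ?_⟩
    exact hsat z (htop ▸ le_top) fun w hw => hc'.total hz (hsub hw)
  have := hrank _ hmax
  rw [Set.ncard_coe_finset] at this
  omega

end IsGeometricLattice

namespace IsMinimalLabeling

variable {L : Type*} [Lattice L] [OrderBot L] {f : L → ℕ} {lab : L → L → L} {u v : L}

theorem sup_lab_eq (hlab : IsMinimalLabeling f lab) (h : u ⋖ v) : u ⊔ lab u v = v :=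
  h.sup_eq_of_le_of_not_le (hlab u v h).2.1 (hlab u v h).2.2.1

theorem lab_eq (hlab : IsMinimalLabeling f lab) (hf : Set.InjOn f {a : L | IsAtom a})
    (h : u ⋖ v) {a : L} (ha : IsAtom a) (hav : a ≤ v) (hau : ¬ a ≤ u)
    (hmin : ∀ e : L, IsAtom e → e ≤ v → ¬ e ≤ u → f a ≤ f e) : lab u v = a := by
  obtain ⟨hat, hle, hnle, hmin'⟩ := hlab u v h
  exact hf hat ha (le_antisymm (hmin' a ha hav hau) (hmin _ hat hle hnle))

end IsMinimalLabeling

namespace IsMaxChainFun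

variable {L : Type*} [Lattice L] [BoundedOrder L] {f : L → ℕ} {lab : L → L → L} {r : ℕ}
  {g : Fin (r + 1) → L}

theorem eq_sup_labelSeq (hlab : IsMinimalLabeling f lab) (hg : IsMaxChainFun r g)
    (k : Fin (r + 1)) :
    g k = (univ.filter fun j : Fin r => j.castSucc < k).sup (labelSeq lab g) := by
  induction k using Fin.induction with
  | zero => simp [hg.1]
  | succ k ih =>
    have hfilter : (univ.filter fun j : Fin r => j.castSucc < k.succ) =
        insert k (univ.filter fun j : Fin r => j.castSucc < k.castSucc) := by
      ext j
      simp [le_iff_lt_or_eq, or_comm]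
    rw [hfilter, sup_insert, ← ih, sup_comm]
    exact (hlab.sup_lab_eq (hg.2.2 k)).symm

theorem castSucc_eq_sup_Iio (hlab : IsMinimalLabeling f lab) (hg : IsMaxChainFun r g)
    (k : Fin r) : g k.castSucc = (Iio k).sup (labelSeq lab g) := by
  rw [hg.eq_sup_labelSeq hlab]
  congr 1
  ext j
  simp

theorem top_eq_sup (hlab : IsMinimalLabeling f lab) (hg : IsMaxChainFun r g) :
    ⊤ = univ.sup (labelSeq lab g) := by
  rw [← hg.2.1, hg.eq_sup_labelSeq hlab]
  congr 1
  ext j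
  simp [Fin.castSucc_lt_last]

theorem labelSeq_not_le_sup_erase (hgeo : IsGeometricLattice L)
    (hrank : ∀ c : Set L, IsMaxChain (· ≤ ·) c → c.ncard = r + 1)
    (hlab : IsMinimalLabeling f lab) (hg : IsMaxChainFun r g) (k : Fin r) :
    ¬ labelSeq lab g k ≤ (univ.erase k).sup (labelSeq lab g) := by
  intro h
  have htop : (univ.erase k).sup (labelSeq lab g) = ⊤ := by
    refine top_unique ?_
    calc ⊤ = (insert k (univ.erase k)).sup (labelSeq lab g) := by
          rw [insert_erase (mem_univ k), hg.top_eq_sup hlab]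
      _ ≤ (univ.erase k).sup (labelSeq lab g) := by rw [sup_insert]; exact sup_le h le_rfl
  have := hgeo.le_card_of_sup_eq_top hrank _ _ (fun j _ => (hlab _ _ (hg.2.2 j)).1) htop
  rw [card_erase_of_mem (mem_univ k), card_univ, Fintype.card_fin] at this
  have := k.pos
  omega

theorem le_castSucc_of_lt_labelSeq (hlab : IsMinimalLabeling f lab) (hg : IsMaxChainFun r g)
    (hasc : Monotone fun i => f (labelSeq lab g i)) {c : L} (hc : IsAtom c) {t : Fin r}
    (hlt : f c < f (labelSeq lab g t)) : c ≤ g t.castSucc := by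
  by_contra h
  obtain ⟨k, htk, hk, hk'⟩ :=
    Fin.exists_le_not_castSucc_and_succ_s10 (P := fun j => c ≤ g j) t h (hg.2.1 ▸ le_top)
  exact (hlt.trans_le ((hasc htk).trans ((hlab _ _ (hg.2.2 k)).2.2.2 c hc hk' hk))).false

theorem le_sup_erase_of_lt_labelSeq {C M : Fin (r + 1) → L} (hlab : IsMinimalLabeling f lab)
    (hC : IsMaxChainFun r C) (hasc : Monotone fun i => f (labelSeq lab C i))
    (σ : Equiv.Perm (Fin r)) (hσ : ∀ i : Fin r, labelSeq lab M i = labelSeq lab C (σ i))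
    {c : L} (hc : IsAtom c) {k : Fin r} (hlt : f c < f (labelSeq lab M k)) :
    c ≤ (univ.erase k).sup (labelSeq lab M) := by
  rw [hσ k] at hlt
  calc c ≤ C (σ k).castSucc := hC.le_castSucc_of_lt_labelSeq hlab hasc hc hlt
    _ = (Iio (σ k)).sup (labelSeq lab C) := hC.castSucc_eq_sup_Iio hlab _
    _ ≤ (univ.erase k).sup (labelSeq lab M) := Finset.sup_le fun j hj => by
      rw [← σ.apply_symm_apply j, ← hσ]
      refine le_sup (mem_erase.2 ⟨fun h => ?_, mem_univ _⟩)
      rw [← h, σ.apply_symm_apply] at hj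
      exact (mem_Iio.1 hj).false

end IsMaxChainFun

section Descent

variable {L : Type*} [Lattice L] [BoundedOrder L] {f : L → ℕ} {lab : L → L → L}

variable {x y z : L}

theorem IsMinimalLabeling.le_of_descent (hlab : IsMinimalLabeling f lab) (hxy : x ⋖ y)
    (hyz : y ⋖ z) (hdesc : f (lab y z) < f (lab x y)) {e : L} (he : IsAtom e) (hez : e ≤ z)
    (hex : ¬ e ≤ x) : f (lab y z) ≤ f e := by
  by_cases hey : e ≤ y
  · exact (hdesc.trans_le ((hlab x y hxy).2.2.2 e he hey hex)).le
  · exact (hlab y z hyz).2.2.2 e he hez hey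

theorem IsGeometricLattice.covBy_sup_lab (hgeo : IsGeometricLattice L)
    (hlab : IsMinimalLabeling f lab) (hxy : x ⋖ y) (hyz : y ⋖ z) :
    x ⋖ x ⊔ lab y z ∧ x ⊔ lab y z ⋖ z := by
  obtain ⟨ha, haz, hay, -⟩ := hlab y z hyz
  have hxv : x ⋖ x ⊔ lab y z := hgeo.covBy_sup_atom ha fun h => hay (h.trans hxy.le)
  have hvy : ¬ x ⊔ lab y z ≤ y := fun h => hay (le_sup_right.trans h)
  have hyv : y ⊔ (x ⊔ lab y z) = z :=
    hyz.sup_eq_of_le_of_not_le (sup_le (hxy.le.trans hyz.le) haz) hvy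
  refine ⟨hxv, ?_⟩
  have := (hgeo.2 x _ y (fun h => hvy h.le) hxv hxy).1
  rwa [sup_comm (x ⊔ lab y z) y, hyv] at this

theorem exists_swap_of_descent (hgeo : IsGeometricLattice L)
    (hf : Set.InjOn f {a : L | IsAtom a}) (hlab : IsMinimalLabeling f lab) (hxy : x ⋖ y)
    (hyz : y ⋖ z) (hdesc : f (lab y z) < f (lab x y)) {J : L} (hxJ : x ≤ J)
    (haJ : lab y z ≤ J) (hbJ : ¬ lab x y ≤ J)
    (hJ : ∀ c : L, IsAtom c → f c < f (lab x y) → c ≤ J) :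
    ∃ v : L, x ⋖ v ∧ v ⋖ z ∧ lab x v = lab y z ∧ lab v z = lab x y ∧
      ∀ w : L, x ⋖ w → w ⋖ z →
        (toLex (f (lab x v), f (lab v z)) : ℕ ×ₗ ℕ) ≤
          toLex (f (lab x w), f (lab w z)) := by
  obtain ⟨hxv, hvz⟩ := hgeo.covBy_sup_lab hlab hxy hyz
  obtain ⟨ha, -, hay, -⟩ := hlab y z hyz
  obtain ⟨hb, hby, -, -⟩ := hlab x y hxy
  have hvJ : x ⊔ lab y z ≤ J := sup_le hxJ haJ
  have hlab_xv : lab x (x ⊔ lab y z) = lab y z :=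
    hlab.lab_eq hf hxv ha le_sup_right (fun h => hay (h.trans hxy.le)) fun e he hev hex =>
      hlab.le_of_descent hxy hyz hdesc he (hev.trans hvz.le) hex
  have hlab_vz : lab (x ⊔ lab y z) z = lab x y := by
    refine hlab.lab_eq hf hvz hb (hby.trans hyz.le) (fun h => hbJ (h.trans hvJ))
      fun c hc hcz hcv => le_of_not_gt fun hlt => hbJ ?_
    calc lab x y ≤ z := hby.trans hyz.le
      _ = x ⊔ lab y z ⊔ c := (hvz.sup_eq_of_le_of_not_le hcz hcv).symm
      _ ≤ J := sup_le hvJ (hJ c hc hlt)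
  refine ⟨_, hxv, hvz, hlab_xv, hlab_vz, fun w hxw hwz => ?_⟩
  rw [hlab_xv, hlab_vz, Prod.Lex.toLex_le_toLex]
  obtain ⟨hw, hwle, hwx, -⟩ := hlab x w hxw
  rcases (hlab.le_of_descent hxy hyz hdesc hw (hwle.trans hwz.le) hwx).lt_or_eq with hlt | heq
  · exact Or.inl hlt
  · have hvw : x ⊔ lab y z = w := hf hw ha heq.symm ▸ hlab.sup_lab_eq hxw
    exact Or.inr ⟨heq, hvw ▸ hlab_vz ▸ le_rfl⟩

end Descent

/-- Descent swapping lemma: let `M` be a maximal chain of a finite geometric lattice of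
rank `r` with a minimal labeling whose label sequence is a rearrangement of the label
sequence of the unique ascending chain `C`, and suppose `M` has a descent at rank `i`.
Then there is `v` with `M (i-1) ⋖ v ⋖ M (i+1)` whose two labels are the two labels of `M`
there swapped, and `(λ(M(i-1),v), λ(v,M(i+1)))` is the lexicographically smallest label
sequence of any saturated chain from `M (i-1)` to `M (i+1)`. -/
theorem stmt10 (L : Type*) [Lattice L] [BoundedOrder L] (r : ℕ)
    (hgeo : IsGeometricLattice L)
    (hrank : ∀ c : Set L, IsMaxChain (· ≤ ·) c → c.ncard = r + 1)
    (f : L → ℕ) (hf : Set.InjOn f {a : L | IsAtom a})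
    (lab : L → L → L) (hlab : IsMinimalLabeling f lab)
    (C : Fin (r+1) → L) (hC : IsMaxChainFun r C)
    (hCasc : Monotone fun i => f (labelSeq lab C i))
    (M : Fin (r+1) → L) (hM : IsMaxChainFun r M)
    (σ : Equiv.Perm (Fin r)) (hσ : ∀ i : Fin r, labelSeq lab M i = labelSeq lab C (σ i))
    (i : ℕ) (h1 : 0 < i) (h2 : i < r)
    (hdesc : f (lab (M ⟨i, by omega⟩) (M ⟨i+1, by omega⟩)) <
             f (lab (M ⟨i-1, by omega⟩) (M ⟨i, by omega⟩))) :
    ∃ v : L, M ⟨i-1, by omega⟩ ⋖ v ∧ v ⋖ M ⟨i+1, by omega⟩ ∧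
      lab (M ⟨i-1, by omega⟩) v = lab (M ⟨i, by omega⟩) (M ⟨i+1, by omega⟩) ∧
      lab v (M ⟨i+1, by omega⟩) = lab (M ⟨i-1, by omega⟩) (M ⟨i, by omega⟩) ∧
      ∀ w : L, M ⟨i-1, by omega⟩ ⋖ w → w ⋖ M ⟨i+1, by omega⟩ →
        (toLex (f (lab (M ⟨i-1, by omega⟩) v), f (lab v (M ⟨i+1, by omega⟩))) : ℕ ×ₗ ℕ) ≤
        toLex (f (lab (M ⟨i-1, by omega⟩) w), f (lab w (M ⟨i+1, by omega⟩))) := by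
  obtain ⟨j, rfl⟩ : ∃ j, i = j + 1 := ⟨i - 1, by omega⟩
  set k : Fin r := ⟨j, by omega⟩
  refine exists_swap_of_descent hgeo hf hlab (hM.2.2 k) (hM.2.2 ⟨j + 1, h2⟩) hdesc
    (J := (univ.erase k).sup (labelSeq lab M)) ?_ ?_
    (hM.labelSeq_not_le_sup_erase hgeo hrank hlab k)
    fun c hc hlt => hC.le_sup_erase_of_lt_labelSeq hlab hCasc σ hσ hc hlt
  · exact (hM.castSucc_eq_sup_Iio hlab k).le.trans
      (sup_mono fun j hj => mem_erase.2 ⟨(mem_Iio.1 hj).ne, mem_univ _⟩)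
  · exact le_sup (f := labelSeq lab M) (b := ⟨j + 1, h2⟩)
      (mem_erase.2 ⟨by simp [k, Fin.ext_iff], mem_univ _⟩)
end
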